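/- arXiv:0804.1813 — 3 statements merged into one kernel-verified Lean document; each statement's English description precedes it below -/
import Mathlib

section
/- Let K be a homology (d-1)-sphere over a fixed coefficient ring, and let A be a proper nonempty subcomplex of K that is itself a homology (d-1)-sphere. Then A = K. (Equivalently: a homology sphere cannot strictly contain another homology sphere of the same dimension as a subcomplex.) -/
open scoped BigOperators

variable {V : Type} [DecidableEq V]

/-- A (finite abstract) simplicial complex: a set of finite subsets of `V`
containing the empty face and closed under taking subsets. -/
def IsComplex (K : Set (Finset V)) : Prop :=
  ∅ ∈ K ∧ ∀ s ∈ K, ∀ t ⊆ s, t ∈ K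

/-- Downward closure of a set of faces. -/
def cl (K : Set (Finset V)) : Set (Finset V) := {t | ∃ s ∈ K, t ⊆ s}

/-- Ordered `n`-tuples of vertices spanning a face (of the downward closure) of `K`;
these index the degree-`n` (ordered) chains, corresponding to faces of cardinality `n`. -/
def vertSimp (K : Set (Finset V)) (n : ℕ) : Type :=
  {f : Fin n → V // Finset.univ.image f ∈ cl K}

/-- Ordered simplicial chains with rational coefficients. Degree `n` chains correspond
to faces of cardinality `n`; degree `0` is spanned by the empty face (augmentation). -/
abbrev Chains (K : Set (Finset V)) (n : ℕ) : Type := vertSimp K n →₀ ℚ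

/-- Deletion of the `i`-th vertex of an ordered simplex. -/
def faceMap {K : Set (Finset V)} {n : ℕ} (s : vertSimp K (n + 1)) (i : Fin (n + 1)) :
    vertSimp K n :=
  ⟨s.1 ∘ i.succAbove, by
    obtain ⟨t, ht, hsub⟩ := s.2
    refine ⟨t, ht, fun x hx => ?_⟩
    simp only [Finset.mem_image, Function.comp_apply] at hx
    obtain ⟨j, -, rfl⟩ := hx
    exact hsub (Finset.mem_image_of_mem _ (Finset.mem_univ _))⟩

/-- The simplicial boundary operator (including the augmentation in lowest degree). -/
noncomputable def bdry (K : Set (Finset V)) (n : ℕ) :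
    Chains K (n + 1) →ₗ[ℚ] Chains K n :=
  Finsupp.lsum ℚ fun s =>
    ∑ i : Fin (n + 1), ((-1 : ℚ) ^ (i : ℕ)) • Finsupp.lsingle (faceMap s i)

/-- Reduced simplicial homology `H̃_m` (for `m ≥ 0`): cycles of degree `m + 1`
modulo (intersection with) boundaries. -/
noncomputable abbrev redH (K : Set (Finset V)) (m : ℕ) :=
  LinearMap.ker (bdry K m) ⧸
    Submodule.comap (LinearMap.ker (bdry K m)).subtype (LinearMap.range (bdry K (m + 1)))

/-- Reduced homology `H̃_{-1}`. -/
noncomputable abbrev redHneg (K : Set (Finset V)) :=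
  Chains K 0 ⧸ LinearMap.range (bdry K 0)

/-- `K` has the reduced homology of the sphere `S^m` (`m = -1` allowed). -/
def SphereHomology (K : Set (Finset V)) (m : ℤ) : Prop :=
  (∀ n : ℕ, Module.rank ℚ (redH K n) = if (n : ℤ) = m then 1 else 0) ∧
  Module.rank ℚ (redHneg K) = if m = -1 then 1 else 0

/-- The link of a face. -/
def link (K : Set (Finset V)) (F : Finset V) : Set (Finset V) :=
  {T | T ∩ F = ∅ ∧ T ∪ F ∈ K}

/-- A homology `m`-sphere: a simplicial complex all of whose face links (including the
link of the empty face, i.e. the complex itself) have the reduced homology of a sphere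
of the complementary dimension. -/
def IsHomologySphere (K : Set (Finset V)) (m : ℤ) : Prop :=
  IsComplex K ∧ ∀ F ∈ K, SphereHomology (link K F) (m - F.card)

/-- The vertex set of a complex. -/
def verts (K : Set (Finset V)) : Set V := {v | {v} ∈ K}

/-- The join of two complexes (on disjoint vertex sets). -/
def joinC (K L : Set (Finset V)) : Set (Finset V) :=
  {F | ∃ A ∈ K, ∃ B ∈ L, F = A ∪ B}

/-- `F` is a missing face of `K`: a non-face, all of whose vertices are vertices of `K`
and all of whose proper subsets are faces of `K`. -/
def IsMissingFace (K : Set (Finset V)) (F : Finset V) : Prop :=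
  (∀ v ∈ F, {v} ∈ K) ∧ F ∉ K ∧ ∀ t ⊂ F, t ∈ K

/-- The number of `i`-dimensional faces (faces of cardinality `i + 1`). -/
noncomputable def fcount (K : Set (Finset V)) (i : ℕ) : ℕ :=
  {F ∈ K | F.card = i + 1}.ncard

/-- `g₂(K) = f₁ - d f₀ + (d+1 choose 2)` for a `(d-1)`-dimensional complex. -/
noncomputable def g2 (d : ℕ) (K : Set (Finset V)) : ℤ :=
  (fcount K 1 : ℤ) - (d : ℤ) * (fcount K 0 : ℤ) + ((d + 1).choose 2 : ℤ)

/-- The boundary complex of the simplex on vertex set `S`: all proper subsets of `S`. -/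
def simplexBdry (S : Finset V) : Set (Finset V) := {F | F ⊂ S}

/-- The cycle (1-dimensional complex) on vertices `c 0, c 1, …, c (n-1)` in cyclic order. -/
def cycleComplex {n : ℕ} (c : ZMod n → V) : Set (Finset V) :=
  {F | F = ∅ ∨ (∃ i, F = {c i}) ∨ ∃ i, F = {c i, c (i + 1)}}

/-- A flag (clique) complex: every set of vertices that is pairwise joined by edges is a face. -/
def FlagComplex (K : Set (Finset V)) : Prop :=
  ∀ F : Finset V, (∀ v ∈ F, {v} ∈ K) →
    (∀ x ∈ F, ∀ y ∈ F, x ≠ y → ({x, y} : Finset V) ∈ K) → F ∈ K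

/-- A `(d-1)`-dimensional complex is prime if it has no missing face of cardinality `d`
and it is not the boundary complex of a simplex. -/
def IsPrime (d : ℕ) (K : Set (Finset V)) : Prop :=
  (¬ ∃ F : Finset V, IsMissingFace K F ∧ F.card = d) ∧
  ¬ ∃ S : Finset V, K = simplexBdry S

/-- Edge contraction of `{u,v}` (contracting `u` into `v`). -/
def contract (K : Set (Finset V)) (u v : V) : Set (Finset V) :=
  {T ∈ K | u ∉ T} ∪ {T | ∃ S ∈ link K {u}, v ∉ S ∧ T = insert v S}

/-- A facet: a maximal face. -/
def IsFacet (K : Set (Finset V)) (F : Finset V) : Prop :=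
  F ∈ K ∧ ∀ G ∈ K, F ⊆ G → G = F

/-- Stellar subdivision at the face `F` using the new vertex `w`. -/
def stellarSub (K : Set (Finset V)) (F : Finset V) (w : V) : Set (Finset V) :=
  {T ∈ K | ¬ F ⊆ T} ∪
  {T | ∃ A B : Finset V, A ⊂ F ∧ B ∈ link K F ∧ T = insert w (A ∪ B)}

/-- An acyclic complex: all reduced homology vanishes. -/
def Acyclic (K : Set (Finset V)) : Prop :=
  (∀ m : ℕ, Module.rank ℚ (redH K m) = 0) ∧ Module.rank ℚ (redHneg K) = 0

/-- A homology `m`-ball with boundary `B`. -/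
def IsHomologyBall (K : Set (Finset V)) (m : ℤ) (B : Set (Finset V)) : Prop :=
  IsComplex K ∧ Acyclic K ∧
  (∀ F ∈ K, Acyclic (link K F) ∨ SphereHomology (link K F) (m - F.card)) ∧
  B = {F ∈ K | Acyclic (link K F)} ∧ IsHomologySphere B (m - 1)

/-!
Every ridge (face of cardinality `d - 1`) of a homology `(d-1)`-sphere lies in exactly two facets,
because its link is a homology `0`-sphere, i.e. two points. Moreover any two facets are joined by a
chain of facets meeting along ridges: by induction on `d`, facets through a common vertex are joined
inside the vertex link, and `H̃₀ = 0` makes the edge graph connected. So if `A ⊆ K` are both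
homology `(d-1)`-spheres, the two facets of `K` through a ridge of `A` are the two facets of `A`
through it; hence the facets of `A` are closed under adjacency in `K`, so they are all the facets
of `K`, and since every face lies in a facet, `A = K`.
-/

section Chains

open Finsupp

variable {K : Set (Finset V)}

instance : Subsingleton (vertSimp K 0) :=
  ⟨fun _ _ => Subtype.ext (funext fun i => i.elim0)⟩

def vertSimp.empty (h : (∅ : Finset V) ∈ K) : vertSimp K 0 :=
  ⟨Fin.elim0, ⟨∅, h, by simp⟩⟩

def vertSimp.vertex {v : V} (h : v ∈ verts K) : vertSimp K 1 :=
  ⟨fun _ => v, ⟨{v}, h, by simp⟩⟩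

theorem IsComplex.vertex_mem_verts (hK : IsComplex K) (s : vertSimp K 1) : s.1 0 ∈ verts K := by
  obtain ⟨t, ht, hst⟩ := s.2
  exact hK.2 t ht _ (by simpa [Finset.image_const] using hst)

theorem IsComplex.pair_mem (hK : IsComplex K) (s : vertSimp K 2) : {s.1 0, s.1 1} ∈ K := by
  obtain ⟨t, ht, hst⟩ := s.2
  refine hK.2 t ht _ ?_
  rwa [show Finset.univ.image s.1 = {s.1 0, s.1 1} by ext; simp [Fin.exists_fin_two, eq_comm]]
    at hst

def vertSimpOneEquiv (hK : IsComplex K) : vertSimp K 1 ≃ verts K where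
  toFun s := ⟨s.1 0, hK.vertex_mem_verts s⟩
  invFun v := vertSimp.vertex v.2
  left_inv s := Subtype.ext (funext fun i => by rw [Subsingleton.elim i 0]; rfl)
  right_inv _ := rfl

theorem bdry_single {n : ℕ} (s : vertSimp K (n + 1)) (c : ℚ) :
    bdry K n (single s c) = ∑ i : Fin (n + 1), ((-1 : ℚ) ^ (i : ℕ)) • single (faceMap s i) c := by
  simp [bdry, lsum_single, lsingle_apply]

theorem bdry_zero_single (h : (∅ : Finset V) ∈ K) (s : vertSimp K 1) (c : ℚ) :
    bdry K 0 (single s c) = single (vertSimp.empty h) c := by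
  rw [bdry_single, Fin.sum_univ_one, Subsingleton.elim (faceMap s 0) (vertSimp.empty h)]
  simp

theorem rank_chains_zero (h : (∅ : Finset V) ∈ K) : Module.rank ℚ (Chains K 0) = 1 := by
  have : Nonempty (vertSimp K 0) := ⟨vertSimp.empty h⟩
  rw [rank_finsupp_self' ℚ, Cardinal.mk_eq_one]

theorem bdry_zero_surjective (h : (∅ : Finset V) ∈ K) (s : vertSimp K 1) :
    Function.Surjective (bdry K 0) := fun c =>
  ⟨single s (c (vertSimp.empty h)), by
    rw [bdry_zero_single h]
    ext q
    rw [Subsingleton.elim q (vertSimp.empty h), single_eq_same]⟩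

theorem IsComplex.verts_nonempty (hK : IsComplex K) (h : Module.rank ℚ (redHneg K) = 0) :
    (verts K).Nonempty := by
  have htop : LinearMap.range (bdry K 0) = ⊤ :=
    Submodule.Quotient.subsingleton_iff.mp (rank_zero_iff.mp h)
  obtain ⟨c, hc⟩ : single (vertSimp.empty hK.1) (1 : ℚ) ∈ LinearMap.range (bdry K 0) := by
    rw [htop]; trivial
  obtain ⟨s, -⟩ : c.support.Nonempty := by
    rw [Finsupp.support_nonempty_iff]
    rintro rfl
    exact one_ne_zero (single_eq_zero.mp (hc.symm.trans (map_zero _)))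
  exact ⟨s.1 0, hK.vertex_mem_verts s⟩

theorem IsComplex.verts_eq_empty (hK : IsComplex K) (h : Module.rank ℚ (redHneg K) = 1) :
    verts K = ∅ := by
  refine Set.eq_empty_of_forall_notMem fun v hv => ?_
  have : Subsingleton (redHneg K) := Submodule.Quotient.subsingleton_iff.mpr
    (LinearMap.range_eq_top.mpr (bdry_zero_surjective hK.1 (vertSimp.vertex hv)))
  simp at h

theorem IsComplex.bdry_one_eq_zero (hK : IsComplex K) (hsmall : ∀ F ∈ K, F.card ≤ 1) :
    bdry K 1 = 0 := by
  refine lhom_ext fun s c => ?_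
  have hs : s.1 0 = s.1 1 := by
    by_contra hne
    have := hsmall _ (hK.pair_mem s)
    rw [Finset.card_pair hne] at this
    omega
  have hface : faceMap s 0 = faceMap s 1 :=
    Subtype.ext (funext fun j => by rw [Subsingleton.elim j 0]; exact hs.symm)
  rw [bdry_single, Fin.sum_univ_two, hface]
  simp

theorem IsComplex.ncard_verts_eq_two (hK : IsComplex K) (hsmall : ∀ F ∈ K, F.card ≤ 1)
    (h0 : Module.rank ℚ (redH K 0) = 1) : (verts K).ncard = 2 := by
  have hker : Module.rank ℚ (LinearMap.ker (bdry K 0)) = 1 := by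
    have hbot : Submodule.comap (LinearMap.ker (bdry K 0)).subtype
        (LinearMap.range (bdry K 1)) = ⊥ := by
      rw [hK.bdry_one_eq_zero hsmall, LinearMap.range_zero, Submodule.comap_bot,
        Submodule.ker_subtype]
    rw [← h0]
    exact (Submodule.quotEquivOfEqBot _ hbot).rank_eq.symm
  obtain ⟨s⟩ : Nonempty (vertSimp K 1) := by
    by_contra hempty
    have : Subsingleton (LinearMap.ker (bdry K 0)) := by
      rw [not_nonempty_iff] at hempty
      infer_instance
    simp at hker
  have hsurj := bdry_zero_surjective hK.1 s
  have hcard := (bdry K 0).rank_range_add_rank_ker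
  rw [LinearMap.range_eq_top.mpr hsurj, rank_top, rank_chains_zero hK.1, hker,
    rank_finsupp_self', one_add_one_eq_two, Cardinal.mk_congr (vertSimpOneEquiv hK)] at hcard
  rw [← Nat.card_coe_set_eq, Nat.card, ← hcard, Cardinal.toNat_ofNat]

theorem IsComplex.linearCombination_bdry_one (hK : IsComplex K) (φ : V → ℚ)
    (hφ : ∀ a b, {a, b} ∈ K → φ a = φ b) (c : Chains K 2) :
    linearCombination ℚ (fun s : vertSimp K 1 => φ (s.1 0)) (bdry K 1 c) = 0 := by
  suffices (linearCombination ℚ (fun s : vertSimp K 1 => φ (s.1 0))).comp (bdry K 1) = 0 from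
    LinearMap.congr_fun this c
  refine lhom_ext fun s r => ?_
  have e0 : (faceMap s 0).1 0 = s.1 1 := rfl
  have e1 : (faceMap s 1).1 0 = s.1 0 := rfl
  rw [LinearMap.comp_apply, bdry_single, Fin.sum_univ_two, map_add, map_smul, map_smul,
    linearCombination_single, linearCombination_single, e0, e1, hφ _ _ (hK.pair_mem s)]
  simp

theorem IsComplex.reflTransGen_of_rank_redH_zero_eq_zero (hK : IsComplex K)
    (h0 : Module.rank ℚ (redH K 0) = 0) {u v : V} (hu : u ∈ verts K) (hv : v ∈ verts K) :
    Relation.ReflTransGen (fun a b : V => {a, b} ∈ K) u v := by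
  classical
  set x : Chains K 1 := single (vertSimp.vertex hu) 1 - single (vertSimp.vertex hv) 1
  have hx : x ∈ LinearMap.ker (bdry K 0) := by
    simp [x, bdry_zero_single hK.1]
  have : Subsingleton (redH K 0) := rank_zero_iff.mp h0
  obtain ⟨c, hc⟩ : x ∈ LinearMap.range (bdry K 1) :=
    Submodule.mem_comap.mp <| (Submodule.Quotient.mk_eq_zero _).mp <|
      Subsingleton.elim (α := redH K 0) (Submodule.Quotient.mk ⟨x, hx⟩) 0
  -- Test the boundary `[u] - [v]` against the indicator of the edge-path component of `u`.
  set φ : V → ℚ := fun w => if Relation.ReflTransGen (fun a b : V => {a, b} ∈ K) u w then 1 else 0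
  have hφ : ∀ a b, {a, b} ∈ K → φ a = φ b := fun a b hab => by
    have hba : ({b, a} : Finset V) ∈ K := Finset.pair_comm a b ▸ hab
    have hiff : Relation.ReflTransGen (fun a b : V => {a, b} ∈ K) u a ↔
        Relation.ReflTransGen (fun a b : V => {a, b} ∈ K) u b :=
      ⟨fun h => h.tail hab, fun h => h.tail hba⟩
    simp only [φ, hiff]
  have := hK.linearCombination_bdry_one φ hφ c
  rw [hc, map_sub, linearCombination_single, linearCombination_single] at this
  by_contra hnot
  simp [φ, vertSimp.vertex, hnot, Relation.ReflTransGen.refl] at this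

end Chains

section Links

variable {K A : Set (Finset V)} {F : Finset V} {m : ℤ}

theorem mem_link_iff {T : Finset V} : T ∈ link K F ↔ Disjoint T F ∧ T ∪ F ∈ K := by
  rw [link, Set.mem_ofPred_eq, Finset.disjoint_iff_inter_eq_empty]

theorem mem_verts_link {v : V} : v ∈ verts (link K F) ↔ v ∉ F ∧ insert v F ∈ K := by
  rw [verts, Set.mem_ofPred_eq, mem_link_iff, Finset.disjoint_singleton_left, Finset.insert_eq]

theorem mem_link_singleton {v : V} {T : Finset V} : T ∈ link K {v} ↔ v ∉ T ∧ insert v T ∈ K := by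
  rw [mem_link_iff, Finset.disjoint_singleton_right, Finset.union_comm, ← Finset.insert_eq]

theorem link_empty : link K ∅ = K := by
  ext T
  simp [link]

theorem link_mono (h : A ⊆ K) : link A F ⊆ link K F :=
  fun _ hT => ⟨hT.1, h hT.2⟩

theorem link_link {G : Finset V} (hG : G ∈ link K F) : link (link K F) G = link K (G ∪ F) := by
  have hGF := (mem_link_iff.mp hG).1
  ext T
  simp only [mem_link_iff, Finset.disjoint_union_left, Finset.disjoint_union_right,
    Finset.union_assoc]
  tauto

theorem isComplex_link (hK : IsComplex K) (hF : F ∈ K) : IsComplex (link K F) :=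
  ⟨mem_link_iff.mpr ⟨Finset.disjoint_empty_left F, by rwa [Finset.empty_union]⟩, fun _ hs _ hts =>
    ⟨Finset.subset_empty.mp (hs.1 ▸ Finset.inter_subset_inter_right hts),
      hK.2 _ hs.2 _ (Finset.union_subset_union_left hts)⟩⟩

theorem isHomologySphere_link (hK : IsHomologySphere K m) (hF : F ∈ K) :
    IsHomologySphere (link K F) (m - F.card) := by
  refine ⟨isComplex_link hK.1 hF, fun G hG => ?_⟩
  rw [link_link hG]
  have := hK.2 (G ∪ F) (mem_link_iff.mp hG).2
  rwa [Finset.card_union_of_disjoint (mem_link_iff.mp hG).1, Nat.cast_add, add_comm,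
    ← sub_sub] at this

theorem IsHomologySphere.sphereHomology (hK : IsHomologySphere K m) : SphereHomology K m := by
  simpa [link_empty] using hK.2 ∅ hK.1.1

end Links

section Spheres

variable {K A : Set (Finset V)} {F : Finset V} {d : ℕ} {m : ℤ}

theorem IsHomologySphere.verts_eq_empty (hK : IsHomologySphere K (-1)) : verts K = ∅ :=
  hK.1.verts_eq_empty (by simpa using hK.sphereHomology.2)

theorem IsHomologySphere.verts_nonempty (hK : IsHomologySphere K m) (hm : m ≠ -1) :
    (verts K).Nonempty :=
  hK.1.verts_nonempty (by simpa [hm] using hK.sphereHomology.2)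

theorem IsHomologySphere.card_le (hK : IsHomologySphere K (d - 1)) (hF : F ∈ K) :
    F.card ≤ d := by
  by_contra! hlt
  obtain ⟨G, hGF, hGcard⟩ := Finset.exists_subset_card_eq hlt.le
  obtain ⟨u, huF, huG⟩ := Finset.exists_of_ssubset (hGF.ssubset_of_ne (by rintro rfl; omega))
  have hL := isHomologySphere_link hK (hK.1.2 F hF G hGF)
  rw [hGcard, show (d : ℤ) - 1 - d = -1 by ring] at hL
  exact Set.eq_empty_iff_forall_notMem.mp hL.verts_eq_empty u
    (mem_verts_link.mpr ⟨huG, hK.1.2 F hF _ (Finset.insert_subset huF hGF)⟩)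

theorem IsHomologySphere.exists_insert_mem (hK : IsHomologySphere K (d - 1)) (hF : F ∈ K)
    (hlt : F.card < d) : ∃ u ∉ F, insert u F ∈ K := by
  obtain ⟨u, hu⟩ := (isHomologySphere_link hK hF).verts_nonempty (by omega)
  exact ⟨u, mem_verts_link.mp hu⟩

theorem IsHomologySphere.exists_superset_card_eq (hK : IsHomologySphere K (d - 1))
    (hF : F ∈ K) : ∃ G ∈ K, F ⊆ G ∧ G.card = d := by
  induction h : d - F.card generalizing F with
  | zero => exact ⟨F, hF, subset_rfl, by have := hK.card_le hF; omega⟩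
  | succ n ih =>
    obtain ⟨u, hu, huF⟩ := hK.exists_insert_mem hF (by omega)
    obtain ⟨G, hG, hFG, hGcard⟩ := ih huF (by rw [Finset.card_insert_of_notMem hu]; omega)
    exact ⟨G, hG, (Finset.subset_insert u F).trans hFG, hGcard⟩

theorem IsHomologySphere.ncard_verts_link (hK : IsHomologySphere K (d - 1)) (hF : F ∈ K)
    (hcard : F.card + 1 = d) : (verts (link K F)).ncard = 2 := by
  have hL := isHomologySphere_link hK hF
  rw [show (d : ℤ) - 1 - F.card = 0 by omega] at hL
  refine hL.1.ncard_verts_eq_two (fun T hT => ?_) (by simpa using hL.sphereHomology.1 0)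
  have := hK.card_le (mem_link_iff.mp hT).2
  rw [Finset.card_union_of_disjoint (mem_link_iff.mp hT).1] at this
  omega

theorem IsHomologySphere.verts_link_eq_of_subset (hK : IsHomologySphere K (d - 1))
    (hA : IsHomologySphere A (d - 1)) (hAK : A ⊆ K) (hF : F ∈ A) (hcard : F.card + 1 = d) :
    verts (link A F) = verts (link K F) := by
  have hK2 := hK.ncard_verts_link (hAK hF) hcard
  refine Set.eq_of_subset_of_ncard_le (fun _ hv => link_mono hAK hv) ?_
    (Set.finite_of_ncard_ne_zero (by omega))
  rw [hK2, hA.ncard_verts_link hF hcard]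

end Spheres

section StrongConnectivity

def FacetAdj (K : Set (Finset V)) (d : ℕ) (G G' : Finset V) : Prop :=
  G ∈ K ∧ G' ∈ K ∧ G.card = d ∧ G'.card = d ∧ ∃ F ⊆ G, F ⊆ G' ∧ F.card + 1 = d

theorem FacetAdj.insert_of_link {K : Set (Finset V)} {d : ℕ} {v : V} {Q Q' : Finset V}
    (h : FacetAdj (link K {v}) d Q Q') : FacetAdj K (d + 1) (insert v Q) (insert v Q') := by
  obtain ⟨hQ, hQ', hQc, hQ'c, F, hFQ, hFQ', hFc⟩ := h
  rw [mem_link_singleton] at hQ hQ'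
  refine ⟨hQ.2, hQ'.2, by rw [Finset.card_insert_of_notMem hQ.1, hQc],
    by rw [Finset.card_insert_of_notMem hQ'.1, hQ'c], insert v F,
    Finset.insert_subset_insert v hFQ, Finset.insert_subset_insert v hFQ', ?_⟩
  rw [Finset.card_insert_of_notMem fun hvF => hQ.1 (hFQ hvF), hFc]

theorem reflTransGen_facetAdj_of_link {K : Set (Finset V)} {d : ℕ} {v : V}
    (hlink : ∀ Q ∈ link K {v}, ∀ Q' ∈ link K {v}, Q.card = d → Q'.card = d →
      Relation.ReflTransGen (FacetAdj (link K {v}) d) Q Q')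
    {H H' : Finset V} (hH : H ∈ K) (hH' : H' ∈ K) (hHc : H.card = d + 1)
    (hH'c : H'.card = d + 1) (hv : v ∈ H) (hv' : v ∈ H') :
    Relation.ReflTransGen (FacetAdj K (d + 1)) H H' := by
  have herase : ∀ {H}, H ∈ K → v ∈ H → H.erase v ∈ link K {v} := fun hH hv =>
    mem_link_singleton.mpr ⟨Finset.notMem_erase v _, by rwa [Finset.insert_erase hv]⟩
  have := (hlink _ (herase hH hv) _ (herase hH' hv') (by simp [hv, hHc]) (by simp [hv', hH'c])).lift
    (insert v) fun _ _ h => h.insert_of_link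
  rwa [Function.onFun, Finset.insert_erase hv, Finset.insert_erase hv'] at this

theorem IsHomologySphere.reflTransGen_facetAdj_of_edgePath {K : Set (Finset V)} {d : ℕ}
    (hK : IsHomologySphere K (d - 1))
    (hstar : ∀ v, ∀ H ∈ K, ∀ H' ∈ K, H.card = d → H'.card = d → v ∈ H → v ∈ H' →
      Relation.ReflTransGen (FacetAdj K d) H H')
    {u w : V} (hpath : Relation.ReflTransGen (fun a b : V => {a, b} ∈ K) u w)
    {G H : Finset V} (hG : G ∈ K) (hH : H ∈ K) (hGc : G.card = d) (hHc : H.card = d)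
    (hu : u ∈ G) (hw : w ∈ H) : Relation.ReflTransGen (FacetAdj K d) G H := by
  induction hpath generalizing H with
  | refl => exact hstar u G hG H hH hGc hHc hu hw
  | tail _ hbc ih =>
    obtain ⟨H'', hH'', hbcH'', hH''c⟩ := hK.exists_superset_card_eq hbc
    exact (ih hH'' hH''c (hbcH'' (by simp))).trans
      (hstar _ _ hH'' _ hH hH''c hHc (hbcH'' (by simp)) hw)

theorem IsHomologySphere.reflTransGen_facetAdj : ∀ {d : ℕ} {K : Set (Finset V)},
    IsHomologySphere K (d - 1) → ∀ {G G' : Finset V}, G ∈ K → G' ∈ K → G.card = d →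
      G'.card = d → Relation.ReflTransGen (FacetAdj K d) G G'
  | 0, _, _, _, _, _, _, hGc, hG'c => by
    rw [Finset.card_eq_zero.mp hGc, Finset.card_eq_zero.mp hG'c]
  | 1, _, _, _, _, hG, hG', hGc, hG'c =>
    .single ⟨hG, hG', hGc, hG'c, ∅, Finset.empty_subset _, Finset.empty_subset _, rfl⟩
  | d + 2, K, hK, G, G', hG, hG', hGc, hG'c => by
    have hstar : ∀ v, ∀ H ∈ K, ∀ H' ∈ K, H.card = d + 2 → H'.card = d + 2 → v ∈ H → v ∈ H' →
        Relation.ReflTransGen (FacetAdj K (d + 2)) H H' := fun v H hH H' hH' hHc hH'c hv hv' => by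
      have hL := isHomologySphere_link hK (hK.1.2 H hH {v} (by simpa using hv))
      rw [Finset.card_singleton, show ((d + 2 : ℕ) : ℤ) - 1 - (1 : ℕ) = (d + 1 : ℕ) - 1 by
        push_cast; ring] at hL
      exact reflTransGen_facetAdj_of_link (fun Q hQ Q' hQ' => hL.reflTransGen_facetAdj hQ hQ')
        hH hH' hHc hH'c hv hv'
    have h0 : Module.rank ℚ (redH K 0) = 0 := by
      simpa [show (0 : ℤ) ≠ (d : ℤ) + 2 - 1 by omega] using hK.sphereHomology.1 0
    obtain ⟨u, hu⟩ := Finset.card_pos.mp (by omega : 0 < G.card)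
    obtain ⟨u', hu'⟩ := Finset.card_pos.mp (by omega : 0 < G'.card)
    have hvert : ∀ {v H}, H ∈ K → v ∈ H → v ∈ verts K := fun hH hv =>
      hK.1.2 _ hH _ (Finset.singleton_subset_iff.mpr hv)
    exact hK.reflTransGen_facetAdj_of_edgePath hstar
      (hK.1.reflTransGen_of_rank_redH_zero_eq_zero h0 (hvert hG hu) (hvert hG' hu'))
      hG hG' hGc hG'c hu hu'

end StrongConnectivity

theorem IsHomologySphere.mem_of_facetAdj {K A : Set (Finset V)} {d : ℕ}
    (hK : IsHomologySphere K (d - 1)) (hA : IsHomologySphere A (d - 1)) (hAK : A ⊆ K)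
    {H H' : Finset V} (hH : H ∈ A) (hadj : FacetAdj K d H H') : H' ∈ A := by
  obtain ⟨-, hH', -, hH'c, F, hFH, hFH', hFc⟩ := hadj
  obtain ⟨u, hu, huF⟩ := Finset.exists_of_ssubset (hFH'.ssubset_of_ne (by rintro rfl; omega))
  have hH'eq : insert u F = H' := Finset.eq_of_subset_of_card_le (Finset.insert_subset hu hFH')
    (by rw [Finset.card_insert_of_notMem huF]; omega)
  have hmem : u ∈ verts (link K F) := mem_verts_link.mpr ⟨huF, hH'eq ▸ hH'⟩
  rw [← hK.verts_link_eq_of_subset hA hAK (hA.1.2 H hH F hFH) hFc] at hmem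
  exact hH'eq ▸ (mem_verts_link.mp hmem).2

theorem stmt4_general {V : Type} [DecidableEq V] (d : ℕ) (K A : Set (Finset V))
    (hK : IsHomologySphere K ((d : ℤ) - 1)) (hA : IsHomologySphere A ((d : ℤ) - 1))
    (hsub : A ⊆ K) :
    A = K := by
  obtain ⟨G₀, hG₀, -, hG₀c⟩ := hA.exists_superset_card_eq hA.1.1
  have hfacet : ∀ G ∈ K, G.card = d → G ∈ A := fun G hG hGc => by
    have hpath := hK.reflTransGen_facetAdj (hsub hG₀) hG hG₀c hGc
    clear hG hGc
    induction hpath with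
    | refl => exact hG₀
    | tail _ hadj ih => exact hK.mem_of_facetAdj hA hsub ih hadj
  refine hsub.antisymm fun F hF => ?_
  obtain ⟨G, hG, hFG, hGc⟩ := hK.exists_superset_card_eq hF
  exact hA.1.2 G (hfacet G hG hGc) F hFG

/-- a homology `(d-1)`-sphere cannot strictly contain another homology
`(d-1)`-sphere as a subcomplex: a nonempty subcomplex of `K` which is itself a homology
`(d-1)`-sphere equals `K`. -/
theorem stmt4 {V : Type} [DecidableEq V] (d : ℕ) (hd : 1 ≤ d) (K A : Set (Finset V))
    (hK : IsHomologySphere K ((d : ℤ) - 1)) (hA : IsHomologySphere A ((d : ℤ) - 1))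
    (hsub : A ⊆ K) (hne : A.Nonempty) :
    A = K :=
  stmt4_general d K A hK hA hsub
end

section
/- Let G_1 = (V_1, E_1) and G_2 = (V_2, E_2) be generically d-rigid graphs such that |V_1 ∩ V_2| ≥ d. Then G_1 ∪ G_2 is generically d-rigid. (Gluing Lemma, in the linear-algebraic formulation: if the row space of the generic rigidity matrix of G_i equals that of the complete graph on V_i for i = 1,2, and the intersection has at least d vertices, then the row space of the generic rigidity matrix of G_1 ∪ G_2 equals that of the complete graph on V_1 ∪ V_2.) -/
/-- The rigidity matrix of the graph with edge set `E` (edges `(v,u)` with `v < u`)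
under the embedding `f : Fin n → ℝ^d`: the column of an edge `{v < u}` has the vector
`f v - f u` in the `d` rows of `v`, the vector `f u - f v` in the rows of `u`, and zeros
elsewhere. -/
def rigMatrix {n d : ℕ} (f : Fin n → Fin d → ℝ) (E : Finset (Fin n × Fin n)) :
    Matrix (Fin n × Fin d) {e // e ∈ E} ℝ :=
  fun rc e =>
    if rc.1 = e.1.1 then f e.1.1 rc.2 - f e.1.2 rc.2
    else if rc.1 = e.1.2 then f e.1.2 rc.2 - f e.1.1 rc.2
    else 0

/-- The edge set of the complete graph on a vertex set `Vs ⊆ Fin n`. -/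
def completeE {n : ℕ} (Vs : Finset (Fin n)) : Finset (Fin n × Fin n) :=
  Finset.univ.filter fun p => p.1 < p.2 ∧ p.1 ∈ Vs ∧ p.2 ∈ Vs

/-- `G = (Vs, E)` is generically `d`-rigid: for some embedding `f` which is generic
(maximizes the relevant ranks), the column space of `Rig(G,f)` equals the column space
of the rigidity matrix of the complete graph on `Vs`. -/
def GenRigid {n : ℕ} (d : ℕ) (Vs : Finset (Fin n)) (E : Finset (Fin n × Fin n)) : Prop :=
  ∃ f : Fin n → Fin d → ℝ,
    LinearMap.range (Matrix.mulVecLin (rigMatrix f E)) =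
      LinearMap.range (Matrix.mulVecLin (rigMatrix f (completeE Vs))) ∧
    ∀ g : Fin n → Fin d → ℝ,
      (rigMatrix g (completeE Vs)).rank ≤ (rigMatrix f (completeE Vs)).rank ∧
      (rigMatrix g E).rank ≤ (rigMatrix f E).rank

/-- The vertex `v` participates in the stress `w` : some edge containing `v` has a
nonzero coefficient. -/
def Participates {n : ℕ} {E : Finset (Fin n × Fin n)} (w : {e // e ∈ E} → ℝ) (v : Fin n) : Prop :=
  ∃ e : {e // e ∈ E}, (e.1.1 = v ∨ e.1.2 = v) ∧ w e ≠ 0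

/-!
Every condition needed below holds for all embeddings outside the zero set of a nonzero
polynomial in the coordinates: maximality of the rank of a rigidity matrix (the Gram
determinant of a maximal independent set of columns is nonzero) and linear independence of
the difference vectors `f (a i) - f (a 0)` at finitely many chosen vertices. Such conditions
are closed under finite conjunction, so a single embedding `f` satisfies all of them at once. At such an `f`, the generic rigidity of
`G₁` and `G₂` says that their column spaces are those of the complete graphs on `V₁` and `V₂`,
and it remains to show that these two span the column space of the complete graph on
`V₁ ∪ V₂`.

Dually, an infinitesimal motion of both complete frameworks is on each `Vᵢ` of the form
`v ↦ Sᵢ (f v) + tᵢ` with `Sᵢ` skew-symmetric, because `Vᵢ` contains `d + 1` affinely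
independent points (unless one of `V₁`, `V₂` contains the other, which is trivial). The
`d` shared points give `d - 1` independent directions on which `S₁ - S₂` vanishes, and a
skew-symmetric map with a kernel of codimension one is zero. So the motion is a single
infinitesimal isometry on `V₁ ∪ V₂`, hence a motion of the complete framework there.
-/

open Matrix MvPolynomial Module Submodule

section LinearAlgebra

variable {K : Type*} [Field K] {ι κ : Type*} [Fintype κ]

theorem Matrix.linearIndependent_row_iff_rank_eq [Fintype ι] (A : Matrix κ ι K) :
    LinearIndependent K A.row ↔ A.rank = Fintype.card κ := by
  rw [rank_eq_finrank_span_row, linearIndependent_iff_card_eq_finrank_span, Set.finrank,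
    eq_comm]

theorem Matrix.det_ne_zero_iff_rank_eq [DecidableEq κ] (A : Matrix κ κ K) :
    A.det ≠ 0 ↔ A.rank = Fintype.card κ := by
  rw [← linearIndependent_row_iff_rank_eq, linearIndependent_rows_iff_isUnit,
    isUnit_iff_isUnit_det, isUnit_iff_ne_zero]

theorem Matrix.card_le_rank_of_linearIndependent [Fintype ι] {A : Matrix ι κ K} {μ : Type*}
    [Fintype μ] {c : μ → κ} (hc : LinearIndependent K fun i => A.col (c i)) :
    Fintype.card μ ≤ A.rank := by
  rw [rank_eq_finrank_span_cols, ← finrank_span_eq_card hc]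
  exact Submodule.finrank_mono (span_mono (Set.range_comp_subset_range c A.col))

theorem Matrix.exists_linearIndependent_cols (A : Matrix ι κ K) :
    ∃ c : Fin A.rank → κ, LinearIndependent K fun i => A.col (c i) := by
  obtain ⟨μ, c, hinj, hspan, hli⟩ := exists_linearIndependent' K A.col
  have : Finite μ := Finite.of_injective c hinj
  have : Fintype μ := Fintype.ofFinite μ
  have hcard : Fintype.card μ = A.rank := by
    rw [rank_eq_finrank_span_cols, ← hspan, finrank_span_eq_card hli]
  exact ⟨c ∘ (Fintype.equivFinOfCardEq hcard).symm, hli.comp _ (Equiv.injective _)⟩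

end LinearAlgebra

theorem det_gram_ne_zero_iff {ι κ : Type*} [Fintype ι] [Fintype κ] [DecidableEq κ]
    (v : κ → ι → ℝ) : (of fun i j => v i ⬝ᵥ v j).det ≠ 0 ↔ LinearIndependent ℝ v := by
  have hgram : (of fun i j => v i ⬝ᵥ v j) = of v * (of v)ᵀ := by
    ext i j; simp [mul_apply, dotProduct]
  rw [hgram, det_ne_zero_iff_rank_eq, rank_self_mul_transpose,
    ← linearIndependent_row_iff_rank_eq]
  rfl

def zariskiGeneric (R σ : Type*) [CommRing R] [IsDomain R] : Filter (σ → R) where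
  sets := {s | ∃ p : MvPolynomial σ R, p ≠ 0 ∧ {x | eval x p ≠ 0} ⊆ s}
  univ_sets := ⟨1, one_ne_zero, Set.subset_univ _⟩
  sets_of_superset := fun ⟨p, hp, hps⟩ hst => ⟨p, hp, hps.trans hst⟩
  inter_sets := fun ⟨p, hp, hps⟩ ⟨q, hq, hqt⟩ =>
    ⟨p * q, mul_ne_zero hp hq, fun x hx => by
      simp only [Set.mem_ofPred_eq, map_mul, mul_ne_zero_iff] at hx
      exact ⟨hps hx.1, hqt hx.2⟩⟩

section Generic

variable {R σ : Type*} [CommRing R] [IsDomain R]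

theorem eventually_eval_ne_zero {p : MvPolynomial σ R} (hp : p ≠ 0) :
    ∀ᶠ x in zariskiGeneric R σ, eval x p ≠ 0 :=
  ⟨p, hp, subset_rfl⟩

instance [Infinite R] : (zariskiGeneric R σ).NeBot := by
  refine ⟨fun h => ?_⟩
  obtain ⟨p, hp, hsub⟩ := Filter.empty_mem_iff_bot.mpr h
  exact hp (MvPolynomial.funext fun x => by rw [map_zero]; by_contra hx; exact hsub hx)

end Generic

theorem eventually_linearIndependent_eval {σ ι κ : Type*} [Fintype ι] [Fintype κ]
    (P : κ → ι → MvPolynomial σ ℝ) {x₀ : σ → ℝ}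
    (h₀ : LinearIndependent ℝ fun i k => eval x₀ (P i k)) :
    ∀ᶠ x in zariskiGeneric ℝ σ, LinearIndependent ℝ fun i k => eval x (P i k) := by
  classical
  set G := (of fun i j => ∑ k, P i k * P j k).det
  have hG : ∀ x, eval x G =
      (of fun i j => (fun k => eval x (P i k)) ⬝ᵥ fun k => eval x (P j k)).det := by
    intro x
    rw [RingHom.map_det]
    congr 1
    ext i j
    simp [dotProduct]
  have hG₀ : G ≠ 0 := by
    intro h
    apply (det_gram_ne_zero_iff _).mpr h₀
    rw [← hG, h, map_zero]
  filter_upwards [eventually_eval_ne_zero hG₀] with x hx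
  exact (det_gram_ne_zero_iff _).mp (hG x ▸ hx)

theorem eventually_rank_map_eval_ge {σ ι κ : Type*} [Fintype ι] [Fintype κ]
    (A : Matrix ι κ (MvPolynomial σ ℝ)) (x₀ : σ → ℝ) :
    ∀ᶠ x in zariskiGeneric ℝ σ, (A.map (eval x₀)).rank ≤ (A.map (eval x)).rank := by
  obtain ⟨c, hc⟩ := (A.map (eval x₀)).exists_linearIndependent_cols
  filter_upwards [eventually_linearIndependent_eval (fun i k => A k (c i)) hc] with x hx
  simpa using card_le_rank_of_linearIndependent (A := A.map (eval x)) hx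

section DotProduct

variable {K : Type*} [Field K] {ι κ : Type*} [Fintype ι] [DecidableEq ι]

theorem Submodule.mem_of_forall_dotProduct_eq_zero {U : Submodule K (ι → K)} {y : ι → K}
    (h : ∀ x : ι → K, (∀ u ∈ U, x ⬝ᵥ u = 0) → x ⬝ᵥ y = 0) : y ∈ U := by
  rw [← Subspace.forall_mem_dualAnnihilator_apply_eq_zero_iff]
  intro φ hφ
  obtain ⟨x, rfl⟩ := (dotProductEquiv K ι).surjective φ
  exact h x fun u hu => (mem_dualAnnihilator _).mp hφ u hu

theorem Module.Basis.eq_zero_of_forall_dotProduct_eq_zero (b : Basis κ K (ι → K)) {w : ι → K}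
    (h : ∀ i, w ⬝ᵥ b i = 0) : w = 0 :=
  (dotProductEquiv K ι).map_eq_zero_iff.mp (b.ext fun i => h i)

theorem Module.Basis.matrix_eq_zero_of_forall_mulVec_eq_zero (b : Basis κ K (ι → K))
    {M : Matrix ι ι K} (h : ∀ i, M *ᵥ b i = 0) : M = 0 :=
  toLin'.map_eq_zero_iff.mp (b.ext fun i => h i)

end DotProduct

section SkewSymmetric

variable {ι : Type*} [Fintype ι] {S : Matrix ι ι ℝ}

theorem Matrix.mulVec_dotProduct_of_transpose_eq_neg (hS : Sᵀ = -S) (x y : ι → ℝ) :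
    S *ᵥ x ⬝ᵥ y = -(x ⬝ᵥ S *ᵥ y) := by
  rw [dotProduct_comm, dotProduct_mulVec, ← mulVec_transpose, hS, neg_mulVec, neg_dotProduct,
    dotProduct_comm]

theorem Matrix.mulVec_dotProduct_self_of_transpose_eq_neg (hS : Sᵀ = -S) (x : ι → ℝ) :
    S *ᵥ x ⬝ᵥ x = 0 := by
  have := mulVec_dotProduct_of_transpose_eq_neg hS x x
  rw [dotProduct_comm x] at this
  linarith

theorem Matrix.eq_zero_of_transpose_eq_neg {m : ℕ} {S : Matrix (Fin (m + 1)) (Fin (m + 1)) ℝ}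
    (hS : Sᵀ = -S) {u : Fin m → Fin (m + 1) → ℝ} (hu : LinearIndependent ℝ u)
    (hSu : ∀ i, S *ᵥ u i = 0) : S = 0 := by
  refine (Pi.basisFun ℝ _).matrix_eq_zero_of_forall_mulVec_eq_zero fun j => ?_
  set x : Fin (m + 1) → ℝ := Pi.basisFun ℝ _ j
  by_cases hx : x ∈ span ℝ (Set.range u)
  · have hker : span ℝ (Set.range u) ≤ LinearMap.ker (toLin' S) :=
      span_le.mpr (Set.range_subset_iff.mpr hSu)
    exact hker hx
  -- `x` completes `u` to a basis, and `S x` is orthogonal to each of its vectors.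
  have hli : LinearIndependent ℝ (Fin.cons x u) := linearIndependent_finCons.mpr ⟨hu, hx⟩
  let b := basisOfLinearIndependentOfCardEqFinrank hli (by simp)
  refine b.eq_zero_of_forall_dotProduct_eq_zero fun i => ?_
  rw [coe_basisOfLinearIndependentOfCardEqFinrank]
  refine Fin.cases ?_ (fun i => ?_) i
  · exact mulVec_dotProduct_self_of_transpose_eq_neg hS x
  · rw [Fin.cons_succ, mulVec_dotProduct_of_transpose_eq_neg hS, hSu, dotProduct_zero, neg_zero]

end SkewSymmetric

section Rigidity

variable {n d : ℕ}

noncomputable def polyRigMatrix (E : Finset (Fin n × Fin n)) :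
    Matrix (Fin n × Fin d) {e // e ∈ E} (MvPolynomial (Fin n × Fin d) ℝ) :=
  fun rc e =>
    if rc.1 = e.1.1 then X (e.1.1, rc.2) - X (e.1.2, rc.2)
    else if rc.1 = e.1.2 then X (e.1.2, rc.2) - X (e.1.1, rc.2)
    else 0

theorem polyRigMatrix_map_eval (E : Finset (Fin n × Fin n)) (x : Fin n × Fin d → ℝ) :
    (polyRigMatrix E).map (eval x) = rigMatrix (Function.curry x) E := by
  ext rc e
  simp only [polyRigMatrix, rigMatrix, map_apply]
  split_ifs <;> simp

def genericConfig (n d : ℕ) : Filter (Fin n → Fin d → ℝ) :=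
  (zariskiGeneric ℝ (Fin n × Fin d)).map Function.curry

instance : (genericConfig n d).NeBot := Filter.map_neBot

theorem eventually_rank_rigMatrix_ge (f : Fin n → Fin d → ℝ) (E : Finset (Fin n × Fin n)) :
    ∀ᶠ g in genericConfig n d, (rigMatrix f E).rank ≤ (rigMatrix g E).rank := by
  have := eventually_rank_map_eval_ge (polyRigMatrix (d := d) E) (Function.uncurry f)
  simp only [polyRigMatrix_map_eval, Function.curry_uncurry] at this
  exact Filter.eventually_map.mpr this

theorem exists_forall_rank_rigMatrix_le (E : Finset (Fin n × Fin n)) :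
    ∃ f : Fin n → Fin d → ℝ, ∀ g : Fin n → Fin d → ℝ,
      (rigMatrix g E).rank ≤ (rigMatrix f E).rank := by
  have hbdd : BddAbove (Set.range fun f : Fin n → Fin d → ℝ => (rigMatrix f E).rank) :=
    ⟨_, Set.forall_mem_range.mpr fun f => rank_le_card_height (rigMatrix f E)⟩
  obtain ⟨f, hf⟩ := Nat.sSup_mem (Set.range_nonempty _) hbdd
  exact ⟨f, fun g => (le_csSup hbdd ⟨g, rfl⟩).trans_eq hf.symm⟩

theorem eventually_forall_rank_rigMatrix_le (E : Finset (Fin n × Fin n)) :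
    ∀ᶠ f in genericConfig n d, ∀ g : Fin n → Fin d → ℝ,
      (rigMatrix g E).rank ≤ (rigMatrix f E).rank := by
  obtain ⟨f₀, hf₀⟩ := exists_forall_rank_rigMatrix_le (d := d) E
  filter_upwards [eventually_rank_rigMatrix_ge f₀ E] with f hf g
  exact (hf₀ g).trans hf

theorem eventually_linearIndependent_sub {r : ℕ} {a : Fin (r + 1) → Fin n}
    (ha : Function.Injective a) (hr : r ≤ d) :
    ∀ᶠ f in genericConfig n d, LinearIndependent ℝ fun i : Fin r => f (a i.succ) - f (a 0) := by
  let f₀ : Fin n → Fin d → ℝ :=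
    Function.extend (a ∘ Fin.succ) (fun i => Pi.single (Fin.castLE hr i) 1) 0
  have h₀ : LinearIndependent ℝ fun i : Fin r => f₀ (a i.succ) - f₀ (a 0) := by
    have hsucc (i : Fin r) : f₀ (a i.succ) = Pi.single (Fin.castLE hr i) 1 :=
      (ha.comp (Fin.succ_injective _)).extend_apply _ _ i
    have hzero : f₀ (a 0) = 0 :=
      Function.extend_apply' _ _ _ fun ⟨i, hi⟩ => Fin.succ_ne_zero i (ha hi)
    simp only [hsucc, hzero, sub_zero]
    exact (Pi.linearIndependent_single_one (Fin d) ℝ).comp _ (Fin.castLE_injective hr)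
  have := eventually_linearIndependent_eval
    (fun (i : Fin r) (k : Fin d) => X (a i.succ, k) - X (a 0, k))
    (x₀ := Function.uncurry f₀) (by simp only [map_sub, eval_X]; exact h₀)
  refine Filter.eventually_map.mpr (this.mono fun x hx => ?_)
  simp only [map_sub, eval_X] at hx
  exact hx

end Rigidity

section Motions

variable {n d : ℕ}

def edgeVec (f : Fin n → Fin d → ℝ) (e : Fin n × Fin n) : Fin n × Fin d → ℝ := fun rc =>
  if rc.1 = e.1 then f e.1 rc.2 - f e.2 rc.2
  else if rc.1 = e.2 then f e.2 rc.2 - f e.1 rc.2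
  else 0

theorem dotProduct_edgeVec (f : Fin n → Fin d → ℝ) (x : Fin n × Fin d → ℝ) {u v : Fin n}
    (huv : u ≠ v) :
    x ⬝ᵥ edgeVec f (u, v) = (Function.curry x u - Function.curry x v) ⬝ᵥ (f u - f v) := by
  have hsplit : ∀ w k, edgeVec f (u, v) (w, k) =
      (if w = u then f u k - f v k else 0) + (if w = v then f v k - f u k else 0) := by
    intro w k
    by_cases hwu : w = u
    · subst hwu; simp [edgeVec, huv]
    · simp [edgeVec, hwu]
  simp only [dotProduct, Fintype.sum_prod_type, hsplit, mul_add, mul_ite, mul_zero,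
    Finset.sum_add_distrib]
  simp only [Finset.sum_ite_irrel, Finset.sum_const_zero, Finset.sum_ite_eq', Finset.mem_univ,
    if_true, ← Finset.sum_add_distrib]
  refine Finset.sum_congr rfl fun k _ => ?_
  simp only [Pi.sub_apply, Function.curry_apply]
  ring

def rigSpan (f : Fin n → Fin d → ℝ) (E : Finset (Fin n × Fin n)) :
    Submodule ℝ (Fin n × Fin d → ℝ) :=
  LinearMap.range (rigMatrix f E).mulVecLin

theorem finrank_rigSpan (f : Fin n → Fin d → ℝ) (E : Finset (Fin n × Fin n)) :
    finrank ℝ (rigSpan f E) = (rigMatrix f E).rank :=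
  rfl

theorem rigSpan_eq_span (f : Fin n → Fin d → ℝ) (E : Finset (Fin n × Fin n)) :
    rigSpan f E = span ℝ (edgeVec f '' E) := by
  rw [rigSpan, range_mulVecLin, show (rigMatrix f E).col = edgeVec f ∘ Subtype.val from rfl,
    Set.range_comp, Subtype.range_coe]

theorem rigSpan_mono (f : Fin n → Fin d → ℝ) {E E' : Finset (Fin n × Fin n)} (h : E ⊆ E') :
    rigSpan f E ≤ rigSpan f E' := by
  rw [rigSpan_eq_span, rigSpan_eq_span]
  exact span_mono (Set.image_mono (Finset.coe_subset.mpr h))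

theorem rigSpan_union (f : Fin n → Fin d → ℝ) (E E' : Finset (Fin n × Fin n)) :
    rigSpan f (E ∪ E') = rigSpan f E ⊔ rigSpan f E' := by
  rw [rigSpan_eq_span, rigSpan_eq_span, rigSpan_eq_span, Finset.coe_union, Set.image_union,
    span_union]

theorem completeE_mono {V V' : Finset (Fin n)} (h : V ⊆ V') : completeE V ⊆ completeE V' := by
  intro e he
  simp only [completeE, Finset.mem_filter, Finset.mem_univ, true_and] at he ⊢
  exact ⟨he.1, h he.2.1, h he.2.2⟩

def IsInfinitesimalMotion (f p : Fin n → Fin d → ℝ) (V : Finset (Fin n)) : Prop :=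
  ∀ u ∈ V, ∀ v ∈ V, (p u - p v) ⬝ᵥ (f u - f v) = 0

theorem isInfinitesimalMotion_curry_iff (f : Fin n → Fin d → ℝ) (x : Fin n × Fin d → ℝ)
    (V : Finset (Fin n)) :
    IsInfinitesimalMotion f (Function.curry x) V ↔
      ∀ y ∈ rigSpan f (completeE V), x ⬝ᵥ y = 0 := by
  classical
  rw [rigSpan_eq_span]
  constructor
  · intro h y hy
    refine (span_le (p := LinearMap.ker (dotProductEquiv ℝ _ x)) |>.mpr ?_) hy
    rintro _ ⟨⟨u, v⟩, he, rfl⟩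
    simp only [completeE, Finset.coe_filter, Finset.mem_univ, true_and, Set.mem_ofPred_eq] at he
    simpa [dotProduct_edgeVec f x he.1.ne] using h u he.2.1 v he.2.2
  · intro h u hu v hv
    have hedge : ∀ {u v}, u < v → u ∈ V → v ∈ V →
        x ⬝ᵥ edgeVec f (u, v) = 0 := fun huv hu hv =>
      h _ (subset_span ⟨(_, _), by simp [completeE, huv, hu, hv], rfl⟩)
    rcases lt_trichotomy u v with huv | rfl | hvu
    · rw [← dotProduct_edgeVec f x huv.ne]
      exact hedge huv hu hv
    · simp
    · rw [← neg_sub, ← neg_sub (f v), neg_dotProduct_neg, ← dotProduct_edgeVec f x hvu.ne]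
      exact hedge hvu hv hu

theorem IsInfinitesimalMotion.exists_skew {f p : Fin n → Fin d → ℝ} {V : Finset (Fin n)}
    (hp : IsInfinitesimalMotion f p V) {a : Fin (d + 1) → Fin n} (ha : ∀ i, a i ∈ V)
    (hb : LinearIndependent ℝ fun i : Fin d => f (a i.succ) - f (a 0)) :
    ∃ S : Matrix (Fin d) (Fin d) ℝ, Sᵀ = -S ∧
      ∀ u ∈ V, ∀ v ∈ V, p u - p v = S *ᵥ (f u - f v) := by
  classical
  -- polarization of the motion condition, relative to the base vertex `a 0`
  have hpolar : ∀ u ∈ V, ∀ v ∈ V, (p u - p (a 0)) ⬝ᵥ (f v - f (a 0)) +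
      (p v - p (a 0)) ⬝ᵥ (f u - f (a 0)) = 0 := by
    intro u hu v hv
    have huv := hp u hu v hv
    have hu0 := hp u hu (a 0) (ha 0)
    have hv0 := hp v hv (a 0) (ha 0)
    rw [← sub_sub_sub_cancel_right (p u) (p v) (p (a 0)),
      ← sub_sub_sub_cancel_right (f u) (f v) (f (a 0))] at huv
    simp only [sub_dotProduct, dotProduct_sub] at huv hu0 hv0 ⊢
    linarith
  let b := basisOfLinearIndependentOfCardEqFinrank' _ hb (by simp)
  have hb_apply (i : Fin d) : b i = f (a i.succ) - f (a 0) := by simp [b]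
  let S := LinearMap.toMatrix' (b.constr ℝ fun i => p (a i.succ) - p (a 0))
  have hSb (i : Fin d) : S *ᵥ b i = p (a i.succ) - p (a 0) := by
    rw [LinearMap.toMatrix'_mulVec, b.constr_basis]
  have hskew : Sᵀ = -S := by
    rw [eq_neg_iff_add_eq_zero, add_comm]
    refine b.matrix_eq_zero_of_forall_mulVec_eq_zero fun j =>
      b.eq_zero_of_forall_dotProduct_eq_zero fun i => ?_
    rw [add_mulVec, add_dotProduct, mulVec_transpose, ← dotProduct_mulVec, hSb, hSb, hb_apply,
      hb_apply, dotProduct_comm (f _ - _)]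
    exact hpolar _ (ha _) _ (ha _)
  have hmotion : ∀ v ∈ V, p v - p (a 0) = S *ᵥ (f v - f (a 0)) := by
    intro v hv
    rw [← sub_eq_zero]
    refine b.eq_zero_of_forall_dotProduct_eq_zero fun i => ?_
    rw [sub_dotProduct, mulVec_dotProduct_of_transpose_eq_neg hskew, hSb, hb_apply,
      dotProduct_comm (f v - _), sub_neg_eq_add]
    exact hpolar _ hv _ (ha _)
  refine ⟨S, hskew, fun u hu v hv => ?_⟩
  rw [← sub_sub_sub_cancel_right (p u) (p v) (p (a 0)), hmotion u hu, hmotion v hv,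
    ← mulVec_sub, sub_sub_sub_cancel_right]

end Motions

theorem Finset.exists_injective_fin_mem {α : Type*} {s : Finset α} {r : ℕ} (h : r ≤ s.card) :
    ∃ a : Fin r → α, Function.Injective a ∧ ∀ i, a i ∈ s := by
  obtain ⟨t, hts, rfl⟩ := Finset.exists_subset_card_eq h
  exact ⟨Subtype.val ∘ t.equivFin.symm, Subtype.val_injective.comp t.equivFin.symm.injective,
    fun i => hts (t.equivFin.symm i).2⟩

section Gluing

variable {n : ℕ}

theorem IsInfinitesimalMotion.union {m : ℕ} {f p : Fin n → Fin (m + 1) → ℝ}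
    {V₁ V₂ : Finset (Fin n)} (h₁ : IsInfinitesimalMotion f p V₁)
    (h₂ : IsInfinitesimalMotion f p V₂) {a₁ a₂ : Fin (m + 1 + 1) → Fin n}
    (ha₁ : ∀ i, a₁ i ∈ V₁) (ha₂ : ∀ i, a₂ i ∈ V₂)
    (hb₁ : LinearIndependent ℝ fun i : Fin (m + 1) => f (a₁ i.succ) - f (a₁ 0))
    (hb₂ : LinearIndependent ℝ fun i : Fin (m + 1) => f (a₂ i.succ) - f (a₂ 0))
    {w : Fin (m + 1) → Fin n} (hw₁ : ∀ i, w i ∈ V₁) (hw₂ : ∀ i, w i ∈ V₂)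
    (hw : LinearIndependent ℝ fun i : Fin m => f (w i.succ) - f (w 0)) :
    IsInfinitesimalMotion f p (V₁ ∪ V₂) := by
  obtain ⟨S₁, hS₁, hp₁⟩ := h₁.exists_skew ha₁ hb₁
  obtain ⟨S₂, hS₂, hp₂⟩ := h₂.exists_skew ha₂ hb₂
  -- both skew parts agree on the directions spanned by the shared vertices
  have hS : S₁ = S₂ := by
    rw [← sub_eq_zero]
    refine eq_zero_of_transpose_eq_neg ?_ hw fun i => ?_
    · rw [transpose_sub, hS₁, hS₂, neg_sub_neg, neg_sub]
    · rw [sub_mulVec, ← hp₁ _ (hw₁ _) _ (hw₁ 0), ← hp₂ _ (hw₂ _) _ (hw₂ 0), sub_self]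
  subst hS
  have hbase : ∀ v ∈ V₁ ∪ V₂, p v - p (w 0) = S₁ *ᵥ (f v - f (w 0)) := by
    intro v hv
    rcases Finset.mem_union.mp hv with hv | hv
    exacts [hp₁ v hv _ (hw₁ 0), hp₂ v hv _ (hw₂ 0)]
  intro u hu v hv
  rw [← sub_sub_sub_cancel_right (p u) (p v) (p (w 0)), hbase u hu, hbase v hv, ← mulVec_sub,
    sub_sub_sub_cancel_right]
  exact mulVec_dotProduct_self_of_transpose_eq_neg hS₁ _

theorem eventually_rigSpan_completeE_union_le {d : ℕ} {V₁ V₂ : Finset (Fin n)}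
    (hmeet : d ≤ (V₁ ∩ V₂).card) :
    ∀ᶠ f in genericConfig n d, rigSpan f (completeE (V₁ ∪ V₂)) ≤
      rigSpan f (completeE V₁) ⊔ rigSpan f (completeE V₂) := by
  rcases d with _ | m
  · exact .of_forall fun f => (Subsingleton.elim _ _).le
  by_cases h₁₂ : V₁ ⊆ V₂
  · rw [Finset.union_eq_right.mpr h₁₂]
    exact .of_forall fun f => le_sup_right
  by_cases h₂₁ : V₂ ⊆ V₁
  · rw [Finset.union_eq_left.mpr h₂₁]
    exact .of_forall fun f => le_sup_left
  have hcard₁ : (V₁ ∩ V₂).card < V₁.card := Finset.card_lt_card <|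
    Finset.ssubset_iff_subset_ne.mpr ⟨Finset.inter_subset_left, mt Finset.inter_eq_left.mp h₁₂⟩
  have hcard₂ : (V₁ ∩ V₂).card < V₂.card := Finset.card_lt_card <|
    Finset.ssubset_iff_subset_ne.mpr ⟨Finset.inter_subset_right, mt Finset.inter_eq_right.mp h₂₁⟩
  obtain ⟨a₁, ha₁, ha₁V⟩ := Finset.exists_injective_fin_mem (s := V₁) (r := m + 1 + 1)
    (by omega)
  obtain ⟨a₂, ha₂, ha₂V⟩ := Finset.exists_injective_fin_mem (s := V₂) (r := m + 1 + 1)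
    (by omega)
  obtain ⟨w, hw, hwV⟩ := Finset.exists_injective_fin_mem hmeet
  have hw₁ (i : Fin (m + 1)) : w i ∈ V₁ := (Finset.mem_inter.mp (hwV i)).1
  have hw₂ (i : Fin (m + 1)) : w i ∈ V₂ := (Finset.mem_inter.mp (hwV i)).2
  filter_upwards [eventually_linearIndependent_sub ha₁ le_rfl,
    eventually_linearIndependent_sub ha₂ le_rfl,
    eventually_linearIndependent_sub hw m.le_succ] with f hb₁ hb₂ hbw
  intro y hy
  refine mem_of_forall_dotProduct_eq_zero fun x hx => ?_
  have h₁ : IsInfinitesimalMotion f (Function.curry x) V₁ :=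
    (isInfinitesimalMotion_curry_iff f x V₁).mpr fun z hz => hx z (mem_sup_left hz)
  have h₂ : IsInfinitesimalMotion f (Function.curry x) V₂ :=
    (isInfinitesimalMotion_curry_iff f x V₂).mpr fun z hz => hx z (mem_sup_right hz)
  exact (isInfinitesimalMotion_curry_iff f x _).mp
    (h₁.union h₂ ha₁V ha₂V hb₁ hb₂ hw₁ hw₂ hbw) y hy

theorem eventually_rigSpan_completeE_union {d : ℕ} {V₁ V₂ : Finset (Fin n)}
    (hmeet : d ≤ (V₁ ∩ V₂).card) :
    ∀ᶠ f in genericConfig n d, rigSpan f (completeE (V₁ ∪ V₂)) =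
      rigSpan f (completeE V₁) ⊔ rigSpan f (completeE V₂) := by
  filter_upwards [eventually_rigSpan_completeE_union_le hmeet] with f hf
  exact hf.antisymm (sup_le (rigSpan_mono f (completeE_mono Finset.subset_union_left))
    (rigSpan_mono f (completeE_mono Finset.subset_union_right)))

theorem GenRigid.eventually_rigSpan_eq {d : ℕ} {V : Finset (Fin n)}
    {E : Finset (Fin n × Fin n)} (h : GenRigid d V E) (hE : E ⊆ completeE V) :
    ∀ᶠ f in genericConfig n d, rigSpan f E = rigSpan f (completeE V) := by
  obtain ⟨f₀, hspan, hmax⟩ := h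
  filter_upwards [eventually_rank_rigMatrix_ge f₀ E,
    eventually_rank_rigMatrix_ge f₀ (completeE V)] with f hfE hfK
  refine eq_of_le_of_finrank_eq (rigSpan_mono f hE) ?_
  rw [finrank_rigSpan, finrank_rigSpan, (hmax f).2.antisymm hfE, (hmax f).1.antisymm hfK]
  exact congrArg (fun U : Submodule ℝ _ => finrank ℝ U) hspan

end Gluing

/-- Gluing Lemma: if `G₁` and `G₂` are generically `d`-rigid and share at
least `d` vertices, then `G₁ ∪ G₂` is generically `d`-rigid. -/
theorem stmt8 {n : ℕ} (d : ℕ) (V1 V2 : Finset (Fin n))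
    (E1 E2 : Finset (Fin n × Fin n))
    (hE1 : E1 ⊆ completeE V1) (hE2 : E2 ⊆ completeE V2)
    (h1 : GenRigid d V1 E1) (h2 : GenRigid d V2 E2)
    (hmeet : d ≤ (V1 ∩ V2).card) :
    GenRigid d (V1 ∪ V2) (E1 ∪ E2) := by
  obtain ⟨f, hf₁, hf₂, hglue, hmaxK, hmaxE⟩ :=
    ((h1.eventually_rigSpan_eq hE1).and <| (h2.eventually_rigSpan_eq hE2).and <|
      (eventually_rigSpan_completeE_union hmeet).and <|
        (eventually_forall_rank_rigMatrix_le _).and (eventually_forall_rank_rigMatrix_le _)).exists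
  refine ⟨f, ?_, fun g => ⟨hmaxK g, hmaxE g⟩⟩
  change rigSpan f (E1 ∪ E2) = rigSpan f (completeE (V1 ∪ V2))
  rw [rigSpan_union, hf₁, hf₂, hglue]
end

section
/- Let P be a prime simplicial d-polytope (d ≥ 4) and let P' be obtained from P by a stellar subdivision at a ridge F (a (d-2)-dimensional face). Then g_2(∂P') = g_2(∂P) + 1 and f_0(∂P') = f_0(∂P) + 1, and P' is again prime. -/
open scoped BigOperators

noncomputable instance euclidDecEq (d : ℕ) : DecidableEq (EuclideanSpace ℝ (Fin d)) :=
  Classical.decEq _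

variable {V : Type} [DecidableEq V]

/-- `F` is (the vertex set of) a face of the polytope `conv P`: it is cut out of `P` by
a supporting linear functional. (The empty set is a face, via `φ = 0`, `c = 1`.) -/
def IsFaceOf {d : ℕ} (P : Finset (EuclideanSpace ℝ (Fin d)))
    (F : Finset (EuclideanSpace ℝ (Fin d))) : Prop :=
  F ⊆ P ∧ ∃ (φ : EuclideanSpace ℝ (Fin d) →ₗ[ℝ] ℝ) (c : ℝ),
    (∀ v ∈ P, φ v ≤ c) ∧ ∀ v ∈ P, (φ v = c ↔ v ∈ F)

/-- `K` is the boundary complex of the simplicial `d`-polytope with vertex set `P`: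
`P` affinely spans `ℝ^d`, every point of `P` is a vertex, `K` consists of the vertex
sets of the proper faces, and all of these are affinely independent (simpliciality). -/
def IsSimplicialPolytopeBoundary (d : ℕ) (P : Finset (EuclideanSpace ℝ (Fin d)))
    (K : Set (Finset (EuclideanSpace ℝ (Fin d)))) : Prop :=
  affineSpan ℝ (P : Set (EuclideanSpace ℝ (Fin d))) = ⊤ ∧
  (∀ v ∈ P, IsFaceOf P {v}) ∧
  (∀ F : Finset (EuclideanSpace ℝ (Fin d)), F ∈ K ↔ IsFaceOf P F ∧ F ≠ P) ∧
  ∀ F ∈ K, AffineIndependent ℝ (fun x : F => (x : EuclideanSpace ℝ (Fin d)))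

/-!
The faces of the stellar subdivision `K'` avoiding `w` are the faces of `K` not containing `F`,
and those containing `w` are the cones from `w` over the join `∂F * lk F`. When `F` is a ridge
of a simplicial polytope, `lk F` consists of two vertices `a, b`: the functionals constant on
`F` form a plane, in which the vertices outside `F`, seen from `F`, are ordered by a slope;
supporting hyperplanes through `F` pick out the vertices of extremal slope, and affine
independence of the facets forbids ties. So `w` gains the `d + 1` neighbours `F ∪ {a, b}` while
no vertex or edge of `K` contains `F`: `f₀` grows by `1`, `f₁` by `d + 1`, and `g₂` by `1`.
A missing `d`-face of `K'` avoiding `w` would be one of `K`; one containing `w` would either be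
a cone over `∂F * lk F` itself or force a face of `lk F` with `d - 2 ≥ 2` vertices, impossible
as faces of `K` have at most `d` vertices.
-/

open Module

section LinearAlgebra

variable {k E : Type*} [Field k] [AddCommGroup E] [Module k E]

theorem mem_dualAnnihilator_vectorSpan_iff {s : Set E} {p : E} (hp : p ∈ s) (φ : Dual k E) :
    φ ∈ (vectorSpan k s).dualAnnihilator ↔ ∀ x ∈ s, φ (x - p) = 0 := by
  rw [Submodule.mem_dualAnnihilator, vectorSpan_eq_span_vsub_set_right k hp]
  refine ⟨fun h x hx => h _ (Submodule.subset_span ⟨x, hx, rfl⟩), fun h v hv => ?_⟩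
  refine Submodule.span_induction ?_ (map_zero φ) (fun _ _ _ _ hx hy => ?_)
    (fun a _ _ hx => ?_) hv
  · rintro _ ⟨x, hx, rfl⟩
    exact h x hx
  · rw [map_add, hx, hy, add_zero]
  · rw [map_smul, hx, smul_zero]

theorem AffineIndependent.finrank_vectorSpan_finset_add_one {S : Finset E} (hS : S.Nonempty)
    (hind : AffineIndependent k ((↑) : S → E)) :
    finrank k (vectorSpan k (S : Set E)) + 1 = S.card := by
  have : Nonempty S := hS.to_subtype
  convert hind.finrank_vectorSpan_add_one using 4 <;> simp

theorem finrank_dualAnnihilator_vectorSpan_add_card [FiniteDimensional k E] {S : Finset E}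
    (hS : S.Nonempty) (hind : AffineIndependent k ((↑) : S → E)) :
    finrank k (vectorSpan k (S : Set E)).dualAnnihilator + S.card = finrank k E + 1 := by
  have hspan := hind.finrank_vectorSpan_finset_add_one hS
  rw [← Subspace.finrank_add_finrank_dualAnnihilator_eq (vectorSpan k (S : Set E))]
  omega

theorem card_le_finrank_of_affineIndependent [FiniteDimensional k E] {S : Finset E}
    (hind : AffineIndependent k ((↑) : S → E)) {φ : Dual k E} (hφ : φ ≠ 0) {c : k}
    (hc : ∀ x ∈ S, φ x = c) : S.card ≤ finrank k E := by
  obtain rfl | ⟨p, hp⟩ := S.eq_empty_or_nonempty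
  · simp
  have hker : vectorSpan k (S : Set E) ≤ LinearMap.ker φ := by
    have hφS : φ ∈ (vectorSpan k (S : Set E)).dualAnnihilator :=
      (mem_dualAnnihilator_vectorSpan_iff (Finset.mem_coe.2 hp) φ).2 fun x hx => by
        rw [map_sub, hc x hx, hc p hp, sub_self]
    exact fun v hv => (Submodule.mem_dualAnnihilator φ).1 hφS v hv
  have := hind.finrank_vectorSpan_finset_add_one ⟨p, hp⟩
  have := Submodule.finrank_mono hker
  have := Dual.finrank_ker_add_one_of_ne_zero hφ
  omega

theorem exists_linearIndependent_span_pair_eq {W : Submodule k E} (hW : finrank k W = 2)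
    {x : E} (hxW : x ∈ W) (hx : x ≠ 0) :
    ∃ y, LinearIndependent k ![x, y] ∧ Submodule.span k {x, y} = W := by
  have : FiniteDimensional k W := Module.finite_of_finrank_eq_succ hW
  have hlt : Submodule.span k {x} < W := by
    refine lt_of_le_of_ne ((Submodule.span_singleton_le_iff_mem x W).2 hxW) fun h => ?_
    have := finrank_span_singleton (K := k) hx
    rw [h, hW] at this
    omega
  obtain ⟨y, hyW, hy⟩ := SetLike.exists_of_lt hlt
  have hind : LinearIndependent k ![x, y] := LinearIndependent.pair_iff' hx |>.2 fun a h =>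
    hy (h ▸ Submodule.smul_mem _ a (Submodule.mem_span_singleton_self x))
  refine ⟨y, hind, Submodule.eq_of_le_of_finrank_eq ?_ ?_⟩
  · rw [Submodule.span_le, Set.insert_subset_iff, Set.singleton_subset_iff]
    exact ⟨hxW, hyW⟩
  · rw [hW, ← Matrix.range_cons_cons_empty, finrank_span_eq_card hind, Fintype.card_fin]

theorem eq_zero_of_forall_apply_sub_eq_zero {s : Set E} (hs : affineSpan k s = ⊤)
    {φ : Dual k E} {p : E} (hφ : ∀ x ∈ s, φ (x - p) = 0) : φ = 0 := by
  obtain ⟨q, hq⟩ : s.Nonempty := by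
    rw [Set.nonempty_iff_ne_empty]
    rintro rfl
    exact AffineSubspace.bot_ne_top k E E (by rwa [AffineSubspace.span_empty] at hs)
  have hann : φ ∈ (vectorSpan k s).dualAnnihilator :=
    (mem_dualAnnihilator_vectorSpan_iff hq φ).2 fun x hx => by
      rw [show x - q = (x - p) - (q - p) by abel, map_sub, hφ x hx, hφ q hq, sub_self]
  rwa [← direction_affineSpan, hs, AffineSubspace.direction_top, Submodule.dualAnnihilator_top,
    Submodule.mem_bot] at hann

end LinearAlgebra

section Polytope

variable {d : ℕ} {P F T : Finset (EuclideanSpace ℝ (Fin d))}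
  {K : Set (Finset (EuclideanSpace ℝ (Fin d)))}

theorem isFaceOf_filter {φ : Dual ℝ (EuclideanSpace ℝ (Fin d))} {c : ℝ} (h : ∀ v ∈ P, φ v ≤ c) :
    IsFaceOf P (P.filter fun v => φ v = c) :=
  ⟨Finset.filter_subset _ _, φ, c, h, fun v hv => by simp [hv]⟩

namespace IsSimplicialPolytopeBoundary

theorem subset_of_mem (hP : IsSimplicialPolytopeBoundary d P K) (hT : T ∈ K) : T ⊆ P :=
  ((hP.2.2.1 T).1 hT).1.1

theorem ne_of_mem (hP : IsSimplicialPolytopeBoundary d P K) (hT : T ∈ K) : T ≠ P :=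
  ((hP.2.2.1 T).1 hT).2

theorem finite (hP : IsSimplicialPolytopeBoundary d P K) : K.Finite :=
  P.powerset.finite_toSet.subset fun _ hT => by simpa using hP.subset_of_mem hT

theorem singleton_mem (hP : IsSimplicialPolytopeBoundary d P K) (hd : 1 ≤ d)
    {v : EuclideanSpace ℝ (Fin d)} (hv : v ∈ P) : {v} ∈ K := by
  refine (hP.2.2.1 _).2 ⟨hP.2.1 v hv, fun hvP => ?_⟩
  have : Nontrivial (EuclideanSpace ℝ (Fin d)) :=
    have : Nonempty (Fin d) := ⟨⟨0, hd⟩⟩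
    inferInstance
  obtain ⟨x, hx⟩ := exists_ne v
  have hxspan : x ∈ affineSpan ℝ ((P : Set (EuclideanSpace ℝ (Fin d)))) := hP.1 ▸ trivial
  rw [← hvP, Finset.coe_singleton, AffineSubspace.mem_affineSpan_singleton] at hxspan
  exact hx hxspan

theorem card_le (hP : IsSimplicialPolytopeBoundary d P K) (hT : T ∈ K) : T.card ≤ d := by
  obtain ⟨⟨hTP, φ, c, hle, hφT⟩, hTP'⟩ := (hP.2.2.1 T).1 hT
  obtain rfl | ⟨t, ht⟩ := T.eq_empty_or_nonempty
  · simp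
  by_cases hφ : φ = 0
  · refine absurd (Finset.Subset.antisymm hTP fun v hv => (hφT v hv).1 ?_) hTP'
    rw [← (hφT t (hTP ht)).2 ht, hφ, LinearMap.zero_apply, LinearMap.zero_apply]
  · simpa using card_le_finrank_of_affineIndependent (hP.2.2.2 T hT) hφ
      fun x hx => (hφT x (hTP hx)).2 hx

end IsSimplicialPolytopeBoundary

end Polytope

section RidgeFrame

variable {E : Type*} [AddCommGroup E] [Module ℝ E]

structure IsRidgeFrame (P F : Finset E) (f₀ : E) (ψ₀ ψ₁ : Dual ℝ E) : Prop where
  subset : F ⊆ P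
  base_mem : f₀ ∈ F
  neg_of_notMem : ∀ u ∈ P, u ∉ F → ψ₀ (u - f₀) < 0
  linearIndependent : LinearIndependent ℝ ![ψ₀, ψ₁]
  vanish_iff : ∀ φ : Dual ℝ E, (∀ x ∈ F, φ (x - f₀) = 0) ↔ ∃ s t : ℝ, s • ψ₀ + t • ψ₁ = φ

/-- Seen from `F`, the vertex `u ∉ F` lies in the direction of the point `(-1, ridgeSlope u)` of
the `(ψ₀, ψ₁)`-plane. -/
noncomputable def ridgeSlope (f₀ : E) (ψ₀ ψ₁ : Dual ℝ E) (u : E) : ℝ :=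
  ψ₁ (u - f₀) / -ψ₀ (u - f₀)

theorem apply_sub_eq_mul_ridgeSlope {f₀ u : E} {ψ₀ ψ₁ : Dual ℝ E} (hu : ψ₀ (u - f₀) ≠ 0)
    (s t : ℝ) :
    (s • ψ₀ + t • ψ₁) (u - f₀) = -ψ₀ (u - f₀) * (t * ridgeSlope f₀ ψ₀ ψ₁ u - s) := by
  simp only [ridgeSlope, LinearMap.add_apply, LinearMap.smul_apply, smul_eq_mul]
  field_simp
  ring

theorem ridgeSlope_neg (f₀ : E) (ψ₀ ψ₁ : Dual ℝ E) (u : E) :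
    ridgeSlope f₀ ψ₀ (-ψ₁) u = -ridgeSlope f₀ ψ₀ ψ₁ u := by
  simp only [ridgeSlope, LinearMap.neg_apply, neg_div]

namespace IsRidgeFrame

variable {P F : Finset E} {f₀ : E} {ψ₀ ψ₁ : Dual ℝ E}

theorem neg (h : IsRidgeFrame P F f₀ ψ₀ ψ₁) : IsRidgeFrame P F f₀ ψ₀ (-ψ₁) where
  subset := h.subset
  base_mem := h.base_mem
  neg_of_notMem := h.neg_of_notMem
  linearIndependent := LinearIndependent.pair_iff.2 fun s t hst =>
    have := LinearIndependent.pair_iff.1 h.linearIndependent s (-t) (by rw [← hst]; module)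
    ⟨this.1, neg_eq_zero.1 this.2⟩
  vanish_iff φ := (h.vanish_iff φ).trans
    ⟨fun ⟨s, t, hst⟩ => ⟨s, -t, by rw [← hst]; module⟩,
      fun ⟨s, t, hst⟩ => ⟨s, -t, by rw [← hst]; module⟩⟩

theorem smul_add_ne_zero (h : IsRidgeFrame P F f₀ ψ₀ ψ₁) (s : ℝ) {t : ℝ} (ht : t ≠ 0) :
    s • ψ₀ + t • ψ₁ ≠ 0 :=
  fun hst => ht (LinearIndependent.pair_iff.1 h.linearIndependent s t hst).2

end IsRidgeFrame

end RidgeFrame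

namespace IsRidgeFrame

variable {d : ℕ} {P F : Finset (EuclideanSpace ℝ (Fin d))}
  {K : Set (Finset (EuclideanSpace ℝ (Fin d)))}
  {f₀ v : EuclideanSpace ℝ (Fin d)} {ψ₀ ψ₁ : Dual ℝ (EuclideanSpace ℝ (Fin d))}

local notation "τ" => ridgeSlope f₀ ψ₀ ψ₁

theorem exists_ridgeSlope_ne (hP : IsSimplicialPolytopeBoundary d P K)
    (h : IsRidgeFrame P F f₀ ψ₀ ψ₁) (v : EuclideanSpace ℝ (Fin d)) :
    ∃ u ∈ P, u ∉ F ∧ τ u ≠ τ v := by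
  by_contra! hconst
  refine h.smul_add_ne_zero (τ v) one_ne_zero
    (eq_zero_of_forall_apply_sub_eq_zero (p := f₀) hP.1 ?_)
  intro u hu
  by_cases huF : u ∈ F
  · exact (h.vanish_iff _).2 ⟨_, _, rfl⟩ u huF
  · rw [apply_sub_eq_mul_ridgeSlope (h.neg_of_notMem u hu huF).ne, hconst u hu huF]
    ring

theorem isFaceOf_of_forall_ridgeSlope_le (h : IsRidgeFrame P F f₀ ψ₀ ψ₁) {M : ℝ}
    (hM : ∀ u ∈ P, u ∉ F → τ u ≤ M) : IsFaceOf P (P.filter fun u => u ∈ F ∨ τ u = M) := by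
  set χ := M • ψ₀ + (1 : ℝ) • ψ₁
  have hχ : ∀ u ∈ P, χ u - χ f₀ ≤ 0 ∧ (χ u - χ f₀ = 0 ↔ u ∈ F ∨ τ u = M) := by
    intro u hu
    rw [← map_sub]
    by_cases huF : u ∈ F
    · simp [(h.vanish_iff χ).2 ⟨M, 1, rfl⟩ u huF, huF]
    · have hneg := h.neg_of_notMem u hu huF
      rw [apply_sub_eq_mul_ridgeSlope hneg.ne, one_mul]
      refine ⟨mul_nonpos_of_nonneg_of_nonpos (by linarith) (by linarith [hM u hu huF]), ?_⟩
      simp only [mul_eq_zero, neg_eq_zero, hneg.ne, sub_eq_zero, huF, false_or]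
  convert isFaceOf_filter (φ := χ) (c := χ f₀) fun u hu => sub_nonpos.1 (hχ u hu).1 using 1
  refine Finset.filter_congr fun u hu => ?_
  rw [← (hχ u hu).2, sub_eq_zero]

theorem insert_mem_of_forall_ridgeSlope_le (hP : IsSimplicialPolytopeBoundary d P K)
    (h : IsRidgeFrame P F f₀ ψ₀ ψ₁) (hcard : F.card = d - 1) (hv : v ∈ P) (hvF : v ∉ F)
    (hmax : ∀ u ∈ P, u ∉ F → τ u ≤ τ v) :
    insert v F ∈ K ∧ ∀ u ∈ P, u ∉ F → τ u = τ v → u = v := by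
  set G := P.filter fun u => u ∈ F ∨ τ u = τ v
  have hGK : G ∈ K := by
    refine (hP.2.2.1 G).2 ⟨h.isFaceOf_of_forall_ridgeSlope_le hmax, fun hGP => ?_⟩
    obtain ⟨u, hu, huF, hτu⟩ := h.exists_ridgeSlope_ne hP v
    have : u ∈ G := hGP ▸ hu
    simp [G, huF, hτu] at this
  have hFG : insert v F ⊆ G := by
    intro u hu
    rcases Finset.mem_insert.1 hu with rfl | hu
    · simp [G, hv]
    · simp [G, h.subset hu, hu]
  have hunique : ∀ u ∈ P, u ∉ F → τ u = τ v → u = v := by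
    intro u hu huF hτu
    by_contra huv
    have hsub : insert u (insert v F) ⊆ G :=
      Finset.insert_subset (by simp [G, hu, hτu]) hFG
    have := (Finset.card_le_card hsub).trans (hP.card_le hGK)
    rw [Finset.card_insert_of_notMem (by simp [huv, huF]), Finset.card_insert_of_notMem hvF]
      at this
    have := Finset.card_pos.2 ⟨f₀, h.base_mem⟩
    omega
  refine ⟨?_, hunique⟩
  convert hGK using 1
  refine Finset.Subset.antisymm hFG fun u hu => ?_
  obtain ⟨huP, huF | hτu⟩ := Finset.mem_filter.1 hu
  · exact Finset.mem_insert_of_mem huF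
  · by_cases huF : u ∈ F
    · exact Finset.mem_insert_of_mem huF
    · exact hunique u huP huF hτu ▸ Finset.mem_insert_self u F

theorem forall_ridgeSlope_le_or_forall_le (hP : IsSimplicialPolytopeBoundary d P K)
    (h : IsRidgeFrame P F f₀ ψ₀ ψ₁) (hvK : insert v F ∈ K) (hvF : v ∉ F) :
    (∀ u ∈ P, u ∉ F → τ u ≤ τ v) ∨ ∀ u ∈ P, u ∉ F → τ v ≤ τ u := by
  obtain ⟨⟨hsub, φ, c, hle, hφ⟩, hne⟩ := (hP.2.2.1 _).1 hvK
  have hvP : v ∈ P := hsub (Finset.mem_insert_self v F)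
  have hc : φ f₀ = c := (hφ f₀ (h.subset h.base_mem)).2 (Finset.mem_insert_of_mem h.base_mem)
  obtain ⟨s, t, rfl⟩ := (h.vanish_iff φ).1 fun x hx => by
    rw [map_sub, hc, (hφ x (h.subset hx)).2 (Finset.mem_insert_of_mem hx), sub_self]
  have hshift : ∀ u, (s • ψ₀ + t • ψ₁) u - c = (s • ψ₀ + t • ψ₁) (u - f₀) := by
    intro u
    rw [map_sub, hc]
  have hs : s = t * τ v := by
    have := hshift v
    rw [(hφ v hvP).2 (Finset.mem_insert_self v F), sub_self,
      apply_sub_eq_mul_ridgeSlope (h.neg_of_notMem v hvP hvF).ne] at this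
    have hneg := h.neg_of_notMem v hvP hvF
    rcases mul_eq_zero.1 this.symm with h0 | h0 <;> linarith
  have hval : ∀ u ∈ P, u ∉ F →
      (s • ψ₀ + t • ψ₁) u - c = -ψ₀ (u - f₀) * t * (τ u - τ v) := by
    intro u hu huF
    rw [hshift, apply_sub_eq_mul_ridgeSlope (h.neg_of_notMem u hu huF).ne, hs]
    ring
  rcases lt_trichotomy t 0 with ht | rfl | ht
  · refine Or.inr fun u hu huF => ?_
    have hprod := hval u hu huF
    have := mul_neg_of_pos_of_neg (neg_pos.2 (h.neg_of_notMem u hu huF)) ht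
    nlinarith [hle u hu]
  · refine absurd (Finset.Subset.antisymm hsub fun u hu => ?_) hne
    by_cases huF : u ∈ F
    · exact Finset.mem_insert_of_mem huF
    · exact (hφ u hu).1 (by linarith [hval u hu huF])
  · refine Or.inl fun u hu huF => ?_
    have hprod := hval u hu huF
    have := mul_pos (neg_pos.2 (h.neg_of_notMem u hu huF)) ht
    nlinarith [hle u hu]

theorem exists_link_eq_pair (hP : IsSimplicialPolytopeBoundary d P K)
    (h : IsRidgeFrame P F f₀ ψ₀ ψ₁) (hF : F ∈ K) (hcard : F.card = d - 1) :
    ∃ a b, a ≠ b ∧ ∀ v, {v} ∈ link K F ↔ v = a ∨ v = b := by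
  obtain ⟨u₀, hu₀⟩ : (P \ F).Nonempty :=
    Finset.sdiff_nonempty.2 fun hPF => hP.ne_of_mem hF (Finset.Subset.antisymm h.subset hPF)
  obtain ⟨b, hb, hbmax⟩ := (P \ F).exists_max_image τ ⟨u₀, hu₀⟩
  obtain ⟨a, ha, hamin⟩ := (P \ F).exists_min_image τ ⟨u₀, hu₀⟩
  simp only [Finset.mem_sdiff, and_imp] at ha hb hbmax hamin
  have hamax : ∀ u ∈ P, u ∉ F → ridgeSlope f₀ ψ₀ (-ψ₁) u ≤ ridgeSlope f₀ ψ₀ (-ψ₁) a := by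
    intro u hu huF
    rw [ridgeSlope_neg, ridgeSlope_neg, neg_le_neg_iff]
    exact hamin u hu huF
  obtain ⟨hbK, hbuniq⟩ := h.insert_mem_of_forall_ridgeSlope_le hP hcard hb.1 hb.2 hbmax
  obtain ⟨haK, hauniq⟩ := h.neg.insert_mem_of_forall_ridgeSlope_le hP hcard ha.1 ha.2 hamax
  have hlink : ∀ v, {v} ∈ link K F ↔ v ∉ F ∧ insert v F ∈ K := by
    intro v
    rw [link, Set.mem_ofPred_eq, ← Finset.disjoint_iff_inter_eq_empty,
      Finset.disjoint_singleton_left, Finset.insert_eq]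
  refine ⟨a, b, fun hab => ?_, fun v => ?_⟩
  · obtain ⟨u, hu, huF, hτu⟩ := h.exists_ridgeSlope_ne hP b
    exact hτu (le_antisymm (hbmax u hu huF) (hab ▸ hamin u hu huF))
  rw [hlink]
  constructor
  · rintro ⟨hvF, hvK⟩
    have hvP : v ∈ P := hP.subset_of_mem hvK (Finset.mem_insert_self v F)
    rcases h.forall_ridgeSlope_le_or_forall_le hP hvK hvF with hvmax | hvmin
    · exact Or.inr (hbuniq v hvP hvF (le_antisymm (hbmax v hvP hvF) (hvmax b hb.1 hb.2)))
    · refine Or.inl (hauniq v hvP hvF ?_)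
      rw [ridgeSlope_neg, ridgeSlope_neg, neg_inj]
      exact le_antisymm (hvmin a ha.1 ha.2) (hamin v hvP hvF)
  · rintro (rfl | rfl)
    exacts [⟨ha.2, haK⟩, ⟨hb.2, hbK⟩]

end IsRidgeFrame

namespace IsSimplicialPolytopeBoundary

variable {d : ℕ} {P F : Finset (EuclideanSpace ℝ (Fin d))}
  {K : Set (Finset (EuclideanSpace ℝ (Fin d)))}

theorem exists_isRidgeFrame (hP : IsSimplicialPolytopeBoundary d P K) (hF : F ∈ K)
    (hcard : F.card = d - 1) (hd : 2 ≤ d) : ∃ f₀ ψ₀ ψ₁, IsRidgeFrame P F f₀ ψ₀ ψ₁ := by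
  obtain ⟨⟨hFP, ψ₀, c, hle, hψ₀⟩, hFP'⟩ := (hP.2.2.1 F).1 hF
  obtain ⟨f₀, hf₀⟩ : F.Nonempty := Finset.card_pos.1 (by omega)
  have hc : ψ₀ f₀ = c := (hψ₀ f₀ (hFP hf₀)).2 hf₀
  have hneg : ∀ u ∈ P, u ∉ F → ψ₀ (u - f₀) < 0 := fun u hu huF => by
    rw [map_sub, hc, sub_neg]
    exact lt_of_le_of_ne (hle u hu) (mt (hψ₀ u hu).1 huF)
  set W := (vectorSpan ℝ (F : Set (EuclideanSpace ℝ (Fin d)))).dualAnnihilator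
  have hmemW : ∀ φ, φ ∈ W ↔ ∀ x ∈ F, φ (x - f₀) = 0 :=
    mem_dualAnnihilator_vectorSpan_iff (Finset.mem_coe.2 hf₀)
  have hW : finrank ℝ W = 2 := by
    have : finrank ℝ W + F.card = d + 1 :=
      (finrank_dualAnnihilator_vectorSpan_add_card ⟨f₀, hf₀⟩ (hP.2.2.2 F hF)).trans
        (by rw [finrank_euclideanSpace_fin])
    omega
  have hψ₀W : ψ₀ ∈ W := (hmemW ψ₀).2 fun x hx => by
    rw [map_sub, hc, (hψ₀ x (hFP hx)).2 hx, sub_self]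
  have hψ₀ne : ψ₀ ≠ 0 := by
    rintro rfl
    obtain ⟨u, hu, huF⟩ := Finset.exists_of_ssubset (Finset.ssubset_iff_subset_ne.2 ⟨hFP, hFP'⟩)
    exact (hneg u hu huF).ne (LinearMap.zero_apply _)
  obtain ⟨ψ₁, hind, hspan⟩ := exists_linearIndependent_span_pair_eq hW hψ₀W hψ₀ne
  refine ⟨f₀, ψ₀, ψ₁, hFP, hf₀, hneg, hind, fun φ => ?_⟩
  rw [← hmemW, ← hspan, Submodule.mem_span_pair]

theorem exists_link_ridge_eq_pair (hP : IsSimplicialPolytopeBoundary d P K) (hF : F ∈ K)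
    (hcard : F.card = d - 1) (hd : 2 ≤ d) :
    ∃ a b, a ≠ b ∧ ∀ v, {v} ∈ link K F ↔ v = a ∨ v = b :=
  have ⟨_, _, _, h⟩ := hP.exists_isRidgeFrame hF hcard hd
  h.exists_link_eq_pair hP hF hcard

end IsSimplicialPolytopeBoundary

theorem Finset.insert_ssubset_insert_of_ssubset {α : Type*} [DecidableEq α] {s t : Finset α}
    {a : α} (ha : a ∉ t) (h : s ⊂ t) : insert a s ⊂ insert a t := by
  rw [Finset.ssubset_iff_subset_ne] at *
  refine ⟨Finset.insert_subset_insert a h.1, fun he => h.2 ?_⟩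
  rw [← Finset.erase_insert (fun has => ha (h.1 has)), he, Finset.erase_insert ha]

section StellarSubdivision

variable {d : ℕ} {K : Set (Finset V)} {F G S T : Finset V} {w : V}

theorem notMem_stellarSub_self (hwF : w ∉ F) : F ∉ stellarSub K F w := by
  rintro (⟨-, hFF⟩ | ⟨A, B, -, -, rfl⟩)
  · exact hFF subset_rfl
  · exact hwF (Finset.mem_insert_self w _)

theorem mem_stellarSub_iff_of_notMem (hwT : w ∉ T) :
    T ∈ stellarSub K F w ↔ T ∈ K ∧ ¬F ⊆ T := by
  refine ⟨?_, Or.inl⟩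
  rintro (hT | ⟨A, B, -, -, rfl⟩)
  · exact hT
  · exact absurd (Finset.mem_insert_self w _) hwT

theorem insert_mem_stellarSub_iff (hwK : ∀ T ∈ K, w ∉ T) (hF : F ∈ K) (hwS : w ∉ S) :
    insert w S ∈ stellarSub K F w ↔ S ∩ F ⊂ F ∧ S \ F ∈ link K F := by
  refine ⟨?_, fun ⟨hSF, hSlink⟩ => Or.inr ⟨S ∩ F, S \ F, hSF, hSlink, ?_⟩⟩
  · rintro (⟨hK, -⟩ | ⟨A, B, hA, ⟨hBF, hBK⟩, hS⟩)
    · exact absurd (Finset.mem_insert_self w S) (hwK _ hK)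
    have hwAB : w ∉ A ∪ B := by
      rw [Finset.mem_union, not_or]
      exact ⟨fun h => hwK F hF (hA.1 h), fun h => hwK _ hBK (Finset.mem_union_left F h)⟩
    obtain rfl : S = A ∪ B := by
      rw [← Finset.erase_insert hwS, hS, Finset.erase_insert hwAB]
    have hBF' := Finset.disjoint_iff_inter_eq_empty.2 hBF
    rw [Finset.union_inter_distrib_right, Finset.inter_eq_left.2 hA.1, hBF, Finset.union_empty,
      Finset.union_sdiff_distrib, Finset.sdiff_eq_empty_iff_subset.2 hA.1, Finset.empty_union,
      Finset.sdiff_eq_self_of_disjoint hBF']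
    exact ⟨hA, hBF, hBK⟩
  · rw [Finset.union_comm, Finset.sdiff_union_inter]

theorem singleton_mem_stellarSub (hwK : ∀ T ∈ K, w ∉ T) (hF : F ∈ K) (hF₀ : F.Nonempty) :
    {w} ∈ stellarSub K F w := by
  have := (insert_mem_stellarSub_iff hwK hF (Finset.notMem_empty w)).2
    ⟨by simpa [Finset.nonempty_iff_ne_empty, eq_comm] using hF₀, by simpa [link] using hF⟩
  simpa using this

theorem card_le_one_of_mem_link {B : Finset V} (hK : ∀ T ∈ K, T.card ≤ d)
    (hcard : F.card = d - 1) (hB : B ∈ link K F) : B.card ≤ 1 := by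
  have := hK _ hB.2
  rw [Finset.card_union_of_disjoint (Finset.disjoint_iff_inter_eq_empty.2 hB.1)] at this
  omega

/-- `{S | S ∩ F ⊂ F ∧ S \ F ∈ link K F}` is the join `∂F * lk F`; its cone from `w` is what
the subdivision adds. -/
theorem fcount_stellarSub (hK : K.Finite) (hwK : ∀ T ∈ K, w ∉ T) (hF : F ∈ K) {i : ℕ}
    (hi : i + 1 < F.card) :
    fcount (stellarSub K F w) i =
      fcount K i + {S | S ∩ F ⊂ F ∧ S \ F ∈ link K F ∧ S.card = i}.ncard := by
  set C := {S | S ∩ F ⊂ F ∧ S \ F ∈ link K F ∧ S.card = i}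
  have hCK : ∀ S ∈ C, S ⊆ S \ F ∪ F ∧ S \ F ∪ F ∈ K := fun S hS =>
    ⟨by rw [Finset.sdiff_union_self_eq_union]; exact Finset.subset_union_left, hS.2.1.2⟩
  have hwC : ∀ S ∈ C, w ∉ S := fun S hS hwS => hwK _ (hCK S hS).2 ((hCK S hS).1 hwS)
  have hCfin : C.Finite := (hK.biUnion fun T _ => T.powerset.finite_toSet).subset fun S hS =>
    Set.mem_iUnion₂.2 ⟨_, (hCK S hS).2, Finset.mem_coe.2 (Finset.mem_powerset.2 (hCK S hS).1)⟩
  have hsplit : {T ∈ stellarSub K F w | T.card = i + 1} =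
      {T ∈ K | T.card = i + 1} ∪ insert w '' C := by
    ext T
    simp only [Set.mem_union, Set.mem_image, Set.mem_ofPred_eq]
    by_cases hwT : w ∈ T
    · have hT : T = insert w (T.erase w) := (Finset.insert_erase hwT).symm
      have hwT' : w ∉ T.erase w := Finset.notMem_erase w T
      rw [hT, insert_mem_stellarSub_iff hwK hF hwT', Finset.card_insert_of_notMem hwT']
      constructor
      · rintro ⟨hcone, hcard⟩
        exact Or.inr ⟨T.erase w, ⟨hcone.1, hcone.2, by omega⟩, rfl⟩
      · rintro (⟨hK, -⟩ | ⟨S, hS, hST⟩)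
        · exact absurd (Finset.mem_insert_self w _) (hwK _ hK)
        · have : S = T.erase w := by
            rw [← Finset.erase_insert (hwC S hS), hST, Finset.erase_insert hwT']
          subst this
          exact ⟨⟨hS.1, hS.2.1⟩, by rw [hS.2.2]⟩
    · rw [mem_stellarSub_iff_of_notMem hwT]
      constructor
      · rintro ⟨⟨hTK, -⟩, hcard⟩
        exact Or.inl ⟨hTK, hcard⟩
      · rintro (⟨hTK, hcard⟩ | ⟨S, -, rfl⟩)
        · exact ⟨⟨hTK, fun hFT => by have := Finset.card_le_card hFT; omega⟩, hcard⟩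
        · exact absurd (Finset.mem_insert_self w S) hwT
  have hdisj : Disjoint {T ∈ K | T.card = i + 1} (insert w '' C) := by
    rw [Set.disjoint_left]
    rintro _ ⟨hTK, -⟩ ⟨S, -, rfl⟩
    exact hwK _ hTK (Finset.mem_insert_self w S)
  have hinj : Set.InjOn (insert w) C := fun S hS S' hS' h => by
    rw [← Finset.erase_insert (hwC S hS), h, Finset.erase_insert (hwC S' hS')]
  rw [fcount, fcount, hsplit, Set.ncard_union_eq hdisj (hK.subset fun _ hT => hT.1)
    (hCfin.image _), hinj.ncard_image]

theorem fcount_stellarSub_zero (hK : K.Finite) (hwK : ∀ T ∈ K, w ∉ T) (hF : F ∈ K)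
    (hF₂ : 2 ≤ F.card) : fcount (stellarSub K F w) 0 = fcount K 0 + 1 := by
  rw [fcount_stellarSub hK hwK hF (by omega)]
  convert congrArg (fcount K 0 + ·) (Set.ncard_singleton (∅ : Finset V))
  ext S
  simp only [Finset.card_eq_zero, Set.mem_ofPred_eq, Set.mem_singleton_iff]
  refine ⟨fun h => h.2.2, ?_⟩
  rintro rfl
  refine ⟨?_, by simpa [link] using hF, rfl⟩
  rw [Finset.empty_inter, Finset.empty_ssubset, ← Finset.card_pos]
  omega

theorem fcount_stellarSub_one (hK : K.Finite) (hwK : ∀ T ∈ K, w ∉ T) (hF : F ∈ K)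
    (hF₃ : 3 ≤ F.card) {a b : V} (hab : a ≠ b)
    (hlink : ∀ v, {v} ∈ link K F ↔ v = a ∨ v = b) :
    fcount (stellarSub K F w) 1 = fcount K 1 + (F.card + 2) := by
  have hnotF : ∀ v, {v} ∈ link K F → v ∉ F := fun v hv hvF => by
    simpa [Finset.singleton_inter_of_mem hvF] using hv.1
  have haF := hnotF a ((hlink a).2 (Or.inl rfl))
  have hbF := hnotF b ((hlink b).2 (Or.inr rfl))
  rw [fcount_stellarSub hK hwK hF (by omega)]
  congr 1
  have : {S | S ∩ F ⊂ F ∧ S \ F ∈ link K F ∧ S.card = 1} =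
      (fun x => {x}) '' ↑(insert a (insert b F)) := by
    ext S
    simp only [Set.mem_ofPred_eq, Set.mem_image, Finset.coe_insert, Set.mem_insert_iff,
      Finset.mem_coe, Finset.card_eq_one]
    constructor
    · rintro ⟨-, hxlink, x, rfl⟩
      refine ⟨x, ?_, rfl⟩
      by_cases hxF : x ∈ F
      · exact Or.inr (Or.inr hxF)
      · rw [Finset.sdiff_eq_self_of_disjoint (Finset.disjoint_singleton_left.2 hxF)] at hxlink
        exact ((hlink x).1 hxlink).imp_right Or.inl
    · rintro ⟨x, hx, rfl⟩
      by_cases hxF : x ∈ F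
      · refine ⟨?_, ?_, x, rfl⟩
        · rw [Finset.singleton_inter_of_mem hxF, Finset.ssubset_iff_subset_ne]
          refine ⟨Finset.singleton_subset_iff.2 hxF, fun h => ?_⟩
          rw [← h, Finset.card_singleton] at hF₃
          omega
        · rw [Finset.sdiff_eq_empty_iff_subset.2 (Finset.singleton_subset_iff.2 hxF)]
          simpa [link] using hF
      · refine ⟨?_, ?_, x, rfl⟩
        · rw [Finset.singleton_inter_of_notMem hxF, Finset.empty_ssubset, ← Finset.card_pos]
          omega
        · rw [Finset.sdiff_eq_self_of_disjoint (Finset.disjoint_singleton_left.2 hxF)]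
          exact (hlink x).2 (by tauto)
  rw [this, Set.ncard_image_of_injective _ Finset.singleton_injective, Set.ncard_coe_finset,
    Finset.card_insert_of_notMem (by simp [hab, haF]), Finset.card_insert_of_notMem hbF]

theorem IsMissingFace.of_stellarSub (hG : IsMissingFace (stellarSub K F w) G) (hwG : w ∉ G)
    (hFG : ¬F ⊆ G) : IsMissingFace K G := by
  refine ⟨fun v hv => ?_, fun hGK => hG.2.1 (Or.inl ⟨hGK, hFG⟩), fun t ht => ?_⟩
  · have hwv : w ∉ ({v} : Finset V) := by
      rw [Finset.mem_singleton]
      rintro rfl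
      exact hwG hv
    exact ((mem_stellarSub_iff_of_notMem hwv).1 (hG.1 v hv)).1
  · exact ((mem_stellarSub_iff_of_notMem fun hwt => hwG (ht.1 hwt)).1 (hG.2.2 t ht)).1

theorem not_isMissingFace_stellarSub_of_mem (hd : 4 ≤ d) (hK : ∀ T ∈ K, T.card ≤ d)
    (hwK : ∀ T ∈ K, w ∉ T) (hF : F ∈ K) (hcard : F.card = d - 1)
    (hG : IsMissingFace (stellarSub K F w) G) (hGcard : G.card = d) (hwG : w ∈ G) : False := by
  set T := G.erase w
  have hwT : w ∉ T := Finset.notMem_erase w G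
  have hGT : G = insert w T := (Finset.insert_erase hwG).symm
  have hTcard : T.card = d - 1 := by rw [Finset.card_erase_of_mem hwG, hGcard]
  have hlink : ∀ S ⊂ T, S \ F ∈ link K F := fun S hS =>
    ((insert_mem_stellarSub_iff hwK hF fun hwS => hwT (hS.1 hwS)).1
      (hG.2.2 _ (hGT ▸ Finset.insert_ssubset_insert_of_ssubset hwT hS))).2
  have hTK := (mem_stellarSub_iff_of_notMem hwT).1 (hG.2.2 T (hGT ▸ Finset.ssubset_insert hwT))
  have hTF : T ∩ F ⊂ F := Finset.ssubset_iff_subset_ne.2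
    ⟨Finset.inter_subset_right, fun h => hTK.2 (h ▸ Finset.inter_subset_left)⟩
  have hTlink : T \ F ∉ link K F := fun h =>
    hG.2.1 (hGT ▸ (insert_mem_stellarSub_iff hwK hF hwT).2 ⟨hTF, h⟩)
  by_cases hTdisj : T \ F = T
  · obtain ⟨x, hx⟩ : T.Nonempty := Finset.card_pos.1 (by omega)
    have := card_le_one_of_mem_link hK hcard (hlink _ (Finset.erase_ssubset hx))
    rw [Finset.erase_sdiff_comm, hTdisj, Finset.card_erase_of_mem hx] at this
    omega
  · exact hTlink (Finset.sdiff_idem T F ▸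
      hlink _ (Finset.ssubset_iff_subset_ne.2 ⟨Finset.sdiff_subset, hTdisj⟩))

theorem stellarSub_ne_simplexBdry (hwK : ∀ T ∈ K, w ∉ T) (hF : F ∈ K)
    (hvF : ∀ v ∈ F, {v} ∈ K) (hF₂ : 2 ≤ F.card) (S : Finset V) :
    stellarSub K F w ≠ simplexBdry S := by
  intro hS
  have hwS : {w} ∈ simplexBdry S :=
    hS ▸ singleton_mem_stellarSub hwK hF (Finset.card_pos.1 (by omega))
  have hFS : F ⊆ S := fun v hv => by
    have hwv : w ∉ ({v} : Finset V) := by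
      rw [Finset.mem_singleton]
      rintro rfl
      exact hwK F hF hv
    have : {v} ∈ simplexBdry S := hS ▸ (mem_stellarSub_iff_of_notMem hwv).2 ⟨hvF v hv, fun h => by
      have := Finset.card_le_card h
      rw [Finset.card_singleton] at this
      omega⟩
    exact this.1 (Finset.mem_singleton_self v)
  obtain rfl : F = S := by
    by_contra hne
    have : F ∈ simplexBdry S := Finset.ssubset_iff_subset_ne.2 ⟨hFS, hne⟩
    exact notMem_stellarSub_self (hwK F hF) (hS ▸ this)
  exact hwK F hF (hwS.1 (Finset.mem_singleton_self w))

theorem isPrime_stellarSub (hd : 4 ≤ d) (hprime : IsPrime d K) (hK : ∀ T ∈ K, T.card ≤ d)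
    (hwK : ∀ T ∈ K, w ∉ T) (hF : F ∈ K) (hvF : ∀ v ∈ F, {v} ∈ K) (hcard : F.card = d - 1) :
    IsPrime d (stellarSub K F w) := by
  refine ⟨?_, fun ⟨S, hS⟩ => stellarSub_ne_simplexBdry hwK hF hvF (by omega) S hS⟩
  rintro ⟨G, hG, hGcard⟩
  by_cases hwG : w ∈ G
  · exact not_isMissingFace_stellarSub_of_mem hd hK hwK hF hcard hG hGcard hwG
  · have hFG : ¬F ⊆ G := fun hFG => notMem_stellarSub_self (hwK F hF)
      (hG.2.2 F (Finset.ssubset_iff_subset_ne.2 ⟨hFG, by rintro rfl; omega⟩))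
    exact hprime.1 ⟨G, hG.of_stellarSub hwG hFG, hGcard⟩

end StellarSubdivision

/-- stellar subdivision at a ridge `F` of (the boundary complex of) a
prime simplicial `d`-polytope increases `g₂` by one, increases the number of vertices by
one, and preserves primality. -/
theorem stmt14 (d : ℕ) (hd : 4 ≤ d) (P : Finset (EuclideanSpace ℝ (Fin d)))
    (K : Set (Finset (EuclideanSpace ℝ (Fin d))))
    (hP : IsSimplicialPolytopeBoundary d P K) (hprime : IsPrime d K)
    (F : Finset (EuclideanSpace ℝ (Fin d))) (hF : F ∈ K) (hcard : F.card = d - 1)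
    (w : EuclideanSpace ℝ (Fin d)) (hw : w ∉ verts K) :
    g2 d (stellarSub K F w) = g2 d K + 1 ∧
    fcount (stellarSub K F w) 0 = fcount K 0 + 1 ∧
    IsPrime d (stellarSub K F w) := by
  have hvert : ∀ T ∈ K, ∀ v ∈ T, {v} ∈ K := fun T hT v hv =>
    hP.singleton_mem (by omega) (hP.subset_of_mem hT hv)
  have hwK : ∀ T ∈ K, w ∉ T := fun T hT hwT => hw (hvert T hT w hwT)
  obtain ⟨a, b, hab, hlink⟩ := hP.exists_link_ridge_eq_pair hF hcard (by omega)
  have hf₀ := fcount_stellarSub_zero hP.finite hwK hF (by omega)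
  have hf₁ := fcount_stellarSub_one hP.finite hwK hF (by omega) hab hlink
  refine ⟨?_, hf₀, isPrime_stellarSub hd hprime (fun T => hP.card_le) hwK hF (hvert F hF) hcard⟩
  rw [g2, g2, hf₀, hf₁, hcard]
  push_cast [show 1 ≤ d by omega]
  ring
end
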